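/- arXiv:1507.03177 — 10 statements merged into one kernel-verified Lean document; each statement's English description precedes it below -/
import Mathlib

section
/- A labeled graph G = ([n], E) is u-representable if and only if G is u^r-representable, where u^r is the reverse of u. -/
/-- `red w` replaces each occurrence of the `i`-th smallest letter of `w` by `i`. -/
def red (w : List ℕ) : List ℕ :=
  w.map (fun x => (w.toFinset.filter (· < x)).card + 1)

/-- `w` has a `u`-match (starting at some position `i`): a factor of `w` of length `|u|`
whose reduction equals `red u` (which is `u` itself when `red u = u`). -/
def HasMatch (u w : List ℕ) : Prop :=
  ∃ i, i + u.length ≤ w.length ∧ red ((w.drop i).take u.length) = red u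

/-- The word `w` `u`-represents the labeled graph with vertex set `V` and adjacency `E`:
the letters occurring in `w` are exactly `V`, and two distinct vertices are adjacent
iff `w` restricted to these two letters has no `u`-match. -/
def Represents (u w : List ℕ) (V : Finset ℕ) (E : ℕ → ℕ → Prop) : Prop :=
  (∀ x, x ∈ w ↔ x ∈ V) ∧
  ∀ x ∈ V, ∀ y ∈ V, x ≠ y →
    (E x y ↔ ¬ HasMatch u (w.filter (fun z => z = x ∨ z = y)))

lemma red_reverse (l : List ℕ) : red l.reverse = (red l).reverse := by
  simp [red, List.map_reverse]

lemma hasMatch_rev {u w : List ℕ} (h : HasMatch u w) :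
    HasMatch u.reverse w.reverse := by
  obtain ⟨i, hi, hr⟩ := h
  refine ⟨w.length - (i + u.length), ?_, ?_⟩
  · simp only [List.length_reverse]; omega
  · have h1 : w.reverse.drop (w.length - (i + u.length)) =
        (w.take (i + u.length)).reverse := by
      rw [List.reverse_take]
    rw [List.length_reverse, h1]
    have h2 : (w.take (i + u.length)).reverse.take u.length =
        ((w.take (i + u.length)).drop i).reverse := by
      rw [List.reverse_drop]; congr 1
      rw [List.length_take]; omega
    rw [h2, List.drop_take]
    have h3 : i + u.length - i = u.length := by omega
    rw [h3, red_reverse, red_reverse, hr]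

lemma hasMatch_rev_iff (u w : List ℕ) :
    HasMatch u.reverse w.reverse ↔ HasMatch u w := by
  constructor
  · intro h
    have := hasMatch_rev h
    simpa using this
  · exact hasMatch_rev

lemma represents_rev {u w : List ℕ} {V : Finset ℕ} {E : ℕ → ℕ → Prop}
    (h : Represents u w V E) : Represents u.reverse w.reverse V E := by
  obtain ⟨hmem, hadj⟩ := h
  refine ⟨fun x => by simpa using hmem x, fun x hx y hy hxy => ?_⟩
  rw [hadj x hx y hy hxy]
  rw [List.filter_reverse, hasMatch_rev_iff]

/-- a labeled graph `([n], E)` is `u`-representable iff it is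
`u^r`-representable, where `u^r` is the reverse of `u`. -/
theorem representable_iff_reverse (n : ℕ) (u : List ℕ)
    (hu : ∀ x ∈ u, x = 1 ∨ x = 2) (hred : red u = u) (hlen : 2 ≤ u.length)
    (E : ℕ → ℕ → Prop) (hsym : Symmetric E) (hirr : ∀ x, ¬ E x x) :
    (∃ w, Represents u w (Finset.Icc 1 n) E) ↔
      (∃ w, Represents u.reverse w (Finset.Icc 1 n) E) := by
  constructor
  · rintro ⟨w, hw⟩
    exact ⟨w.reverse, represents_rev hw⟩
  · rintro ⟨w, hw⟩
    have := represents_rev hw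
    rw [List.reverse_reverse] at this
    exact ⟨w.reverse, this⟩
end

section
/- A labeled graph G = ([n], E) is u-representable if and only if its supplement \bar{G} is u^c-representable, where the supplement \bar{G} = ([n], \bar{E}) has xy in \bar{E} if and only if (n+1-x)(n+1-y) is in E, and u^c swaps letters 1 and 2 in u. -/
open Finset

lemma List.toFinset_map {α β : Type*} [DecidableEq α] [DecidableEq β] (w : List α) (f : α → β) :
    (w.map f).toFinset = w.toFinset.image f := by
  ext
  simp

def letterRank (s : Finset ℕ) (x : ℕ) : ℕ := #(s.filter (· < x)) + 1

lemma red_eq_map_letterRank (w : List ℕ) : red w = w.map (letterRank w.toFinset) := rfl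

lemma letterRank_strictMonoOn (s : Finset ℕ) : StrictMonoOn (letterRank s) s := by
  intro x hx y _ hxy
  have hsub : s.filter (· < x) ⊂ s.filter (· < y) := by
    refine Finset.ssubset_iff_of_subset ?_ |>.2 ⟨x, by simpa [hxy] using hx, by simp⟩
    intro z
    simp only [mem_filter]
    exact And.imp_right (·.trans hxy)
  unfold letterRank
  have := Finset.card_lt_card hsub
  omega

lemma card_toFinset_red (w : List ℕ) : (red w).toFinset.card = w.toFinset.card := by
  rw [red_eq_map_letterRank, List.toFinset_map]
  exact Finset.card_image_of_injOn (letterRank_strictMonoOn _).injOn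

lemma letterRank_image_of_strictAntiOn {s : Finset ℕ} {f : ℕ → ℕ} (hf : StrictAntiOn f s)
    {x : ℕ} (hx : x ∈ s) : letterRank (s.image f) (f x) = #s + 1 - letterRank s x := by
  have himage : (s.image f).filter (· < f x) = (s.filter (x < ·)).image f := by
    ext y
    simp only [mem_filter, mem_image]
    constructor
    · rintro ⟨⟨z, hz, rfl⟩, hlt⟩
      exact ⟨z, ⟨hz, (hf.lt_iff_gt hz hx).1 hlt⟩, rfl⟩
    · rintro ⟨z, ⟨hz, hlt⟩, rfl⟩
      exact ⟨⟨z, hz, rfl⟩, (hf.lt_iff_gt hz hx).2 hlt⟩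
  have hle : s.filter (fun y => ¬ x < y) = insert x (s.filter (· < x)) := by
    ext y
    simp only [mem_filter, mem_insert]
    constructor
    · rintro ⟨hy, hle⟩
      rcases (not_lt.1 hle).eq_or_lt with rfl | hlt
      exacts [Or.inl rfl, Or.inr ⟨hy, hlt⟩]
    · rintro (rfl | ⟨hy, hlt⟩)
      exacts [⟨hx, lt_irrefl _⟩, ⟨hy, hlt.not_gt⟩]
  have hsplit := Finset.card_filter_add_card_filter_not (s := s) (x < ·)
  rw [hle, card_insert_of_notMem (by simp)] at hsplit
  unfold letterRank
  rw [himage, card_image_of_injOn (hf.injOn.mono (filter_subset _ _))]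
  omega

lemma red_map_of_strictAntiOn {w : List ℕ} {f : ℕ → ℕ} (hf : StrictAntiOn f {x | x ∈ w}) :
    red (w.map f) = (red w).map (#w.toFinset + 1 - ·) := by
  have hf' : StrictAntiOn f (w.toFinset : Set ℕ) := by rwa [List.coe_toFinset]
  rw [red_eq_map_letterRank, red_eq_map_letterRank, List.toFinset_map, List.map_map,
    List.map_map]
  exact List.map_congr_left fun x hx =>
    letterRank_image_of_strictAntiOn hf' (List.mem_toFinset.2 hx)

lemma red_map_eq_red_map {t u : List ℕ} {f g : ℕ → ℕ} (hf : StrictAntiOn f {x | x ∈ t})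
    (hg : StrictAntiOn g {x | x ∈ u}) (h : red t = red u) : red (t.map f) = red (u.map g) := by
  have hcard : #t.toFinset = #u.toFinset := by
    rw [← card_toFinset_red, h, card_toFinset_red]
  rw [red_map_of_strictAntiOn hf, red_map_of_strictAntiOn hg, h, hcard]

lemma HasMatch.map_of_strictAntiOn {u v : List ℕ} {f g : ℕ → ℕ}
    (hf : StrictAntiOn f {x | x ∈ v}) (hg : StrictAntiOn g {x | x ∈ u}) (h : HasMatch u v) :
    HasMatch (u.map g) (v.map f) := by
  obtain ⟨i, hi, hred⟩ := h
  refine ⟨i, by simpa using hi, ?_⟩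
  rw [List.length_map, ← List.map_drop, ← List.map_take]
  exact red_map_eq_red_map
    (hf.mono fun x hx => List.mem_of_mem_drop (List.mem_of_mem_take hx)) hg hred

lemma strictAntiOn_sub (a : ℕ) : StrictAntiOn (a - ·) {x | x ≤ a} := by
  intro x _ y (hy : y ≤ a) hxy
  dsimp only
  omega

lemma map_sub_map_sub {l : List ℕ} {a : ℕ} (hl : ∀ x ∈ l, x ≤ a) :
    (l.map (a - ·)).map (a - ·) = l := by
  rw [List.map_map]
  exact (List.map_congr_left fun x hx => Nat.sub_sub_self (hl x hx)).trans (List.map_id l)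

lemma hasMatch_map_sub_iff {u v : List ℕ} {a b : ℕ} (hu : ∀ x ∈ u, x ≤ a)
    (hv : ∀ x ∈ v, x ≤ b) : HasMatch (u.map (a - ·)) (v.map (b - ·)) ↔ HasMatch u v := by
  have hsub {l : List ℕ} {c : ℕ} (hl : ∀ x ∈ l, x ≤ c) : StrictAntiOn (c - ·) {x | x ∈ l} :=
    (strictAntiOn_sub c).mono hl
  have hsub' {l : List ℕ} {c : ℕ} : ∀ x ∈ l.map (c - ·), x ≤ c := by simp
  refine ⟨fun h => ?_, HasMatch.map_of_strictAntiOn (hsub hv) (hsub hu)⟩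
  simpa only [map_sub_map_sub hu, map_sub_map_sub hv] using
    h.map_of_strictAntiOn (hsub hsub') (hsub hsub')

lemma Represents.congr_adj {u w : List ℕ} {V : Finset ℕ} {E E' : ℕ → ℕ → Prop}
    (hE : ∀ x ∈ V, ∀ y ∈ V, E x y ↔ E' x y) (h : Represents u w V E) : Represents u w V E' :=
  ⟨h.1, fun x hx y hy hxy => (hE x hx y hy).symm.trans (h.2 x hx y hy hxy)⟩

lemma Represents.map_sub {u w : List ℕ} {n a : ℕ} {E : ℕ → ℕ → Prop} (hu : ∀ x ∈ u, x ≤ a)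
    (h : Represents u w (Icc 1 n) E) :
    Represents (u.map (a - ·)) (w.map (n + 1 - ·)) (Icc 1 n)
      (fun x y => E (n + 1 - x) (n + 1 - y)) := by
  obtain ⟨hletters, hadj⟩ := h
  have hw : ∀ z ∈ w, 1 ≤ z ∧ z ≤ n := fun z hz => by simpa using (hletters z).1 hz
  refine ⟨fun x => ?_, fun x hx y hy hxy => ?_⟩
  · simp only [List.mem_map, mem_Icc]
    constructor
    · rintro ⟨z, hz, rfl⟩
      have := hw z hz
      omega
    · intro hx
      exact ⟨n + 1 - x, (hletters _).2 (by simp only [mem_Icc]; omega), by omega⟩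
  · simp only [mem_Icc] at hx hy
    have hfilter : (w.map (n + 1 - ·)).filter (fun z => z = x ∨ z = y) =
        (w.filter (fun z => z = n + 1 - x ∨ z = n + 1 - y)).map (n + 1 - ·) := by
      rw [List.filter_map]
      refine congrArg _ (List.filter_congr fun z hz => ?_)
      have := hw z hz
      simp only [Function.comp_apply, decide_eq_decide]
      omega
    have hx' : n + 1 - x ∈ Icc 1 n := by simp only [mem_Icc]; omega
    have hy' : n + 1 - y ∈ Icc 1 n := by simp only [mem_Icc]; omega
    have hxy' : n + 1 - x ≠ n + 1 - y := by omega
    refine (hadj _ hx' _ hy' hxy').trans (not_congr ?_)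
    rw [hfilter, hasMatch_map_sub_iff hu fun z hz => ?_]
    have := hw z (List.mem_of_mem_filter hz)
    omega

theorem representable_iff_supplement_general (n : ℕ) (u : List ℕ)
    (hu : ∀ x ∈ u, x = 1 ∨ x = 2)
    (E : ℕ → ℕ → Prop) :
    (∃ w, Represents u w (Finset.Icc 1 n) E) ↔
      (∃ w, Represents (u.map (fun x => 3 - x)) w (Finset.Icc 1 n)
        (fun x y => E (n + 1 - x) (n + 1 - y))) := by
  have hu3 : ∀ x ∈ u, x ≤ 3 := fun x hx => by rcases hu x hx with rfl | rfl <;> norm_num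
  refine ⟨fun ⟨w, hw⟩ => ⟨_, hw.map_sub hu3⟩, fun ⟨w, hw⟩ => ?_⟩
  have hback := hw.map_sub (a := 3) (by simp)
  rw [map_sub_map_sub hu3] at hback
  refine ⟨_, hback.congr_adj fun x hx y hy => ?_⟩
  simp only [mem_Icc] at hx hy
  rw [Nat.sub_sub_self (by omega), Nat.sub_sub_self (by omega)]

/-- a labeled graph `([n], E)` is `u`-representable iff its supplement
(`x` adjacent to `y` iff `n+1-x` adjacent to `n+1-y` in `G`) is `u^c`-representable,
where `u^c` swaps the letters 1 and 2. -/
theorem representable_iff_supplement (n : ℕ) (u : List ℕ)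
    (hu : ∀ x ∈ u, x = 1 ∨ x = 2) (hred : red u = u) (hlen : 2 ≤ u.length)
    (E : ℕ → ℕ → Prop) (hsym : Symmetric E) (hirr : ∀ x, ¬ E x x) :
    (∃ w, Represents u w (Finset.Icc 1 n) E) ↔
      (∃ w, Represents (u.map (fun x => 3 - x)) w (Finset.Icc 1 n)
        (fun x y => E (n + 1 - x) (n + 1 - y))) :=
  representable_iff_supplement_general n u hu E
end

section
/- Let k ≥ 3, let G = ([n], E) be a labeled graph, and suppose the word w 1^k-represents G. Let ij be an edge of G, let π be any permutation (written as a word) of [n] \ {i, j}, and let p(w) be the initial permutation of w. Then the word w' = i^{k-1} π i p(w) w 1^k-represents the graph G' = ([n], E \ {ij}). -/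
/-- The initial permutation `p(w)` of a word: keep only the leftmost occurrence
of each letter. -/
def initPerm : List ℕ → List ℕ
  | [] => []
  | a :: l => a :: initPerm (l.filter (fun x => x ≠ a))
termination_by l => l.length
decreasing_by
  first
  | exact Nat.lt_succ_of_le (List.length_unattach.trans_le ((List.length_filter_le _ _).trans List.length_attach.le))
  | (simp only [List.length_unattach]; exact Nat.lt_succ_of_le ((List.length_filter_le _ _).trans List.length_attach.le))
  | (simp_wf; exact Nat.lt_succ_of_le (by simpa using List.length_filter_le _ _))

/-! Restricted to two distinct letters `x, y` of `w`, the word `p(w) w` reads `a b a …` with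
`a ≠ b`, because restriction commutes with taking the initial permutation. A run of equal letters
cannot cover two distinct adjacent letters, so a `k`-run in the restricted new word lies either
in the restricted prefix `i^{k-1} π i` followed by `a`, or in the restriction of `w`. When
`{x, y} ≠ {i, j}` the former has no `k`-run: without `i` it is a repetition-free word followed by
one letter, and with `i` the block `i^{k-1}` is cut off from the last `i` by the other letter,
which lies in `π`. When `{x, y} = {i, j}` the prefix restricts to `i^k`. -/

section Runs

variable {α : Type*} {k : ℕ}

def HasRun (k : ℕ) (v : List α) : Prop := ∃ x, List.replicate k x <:+: v

theorem HasRun.mono {v v' : List α} (h : HasRun k v) (hv : v <:+: v') : HasRun k v' :=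
  h.imp fun _ hx => hx.trans hv

theorem HasRun.le_length {v : List α} (h : HasRun k v) : k ≤ v.length := by
  obtain ⟨z, hz⟩ := h
  simpa using hz.length_le

theorem HasRun.exists_le_count [BEq α] [LawfulBEq α] {v : List α} (h : HasRun k v) :
    ∃ z, k ≤ v.count z := by
  obtain ⟨z, hz⟩ := h
  exact ⟨z, by simpa using hz.sublist.count_le z⟩

theorem hasRun_append_cons_cons_iff {L R : List α} {a b : α} (hab : a ≠ b) :
    HasRun k (L ++ a :: b :: R) ↔ HasRun k (L ++ [a]) ∨ HasRun k (b :: R) := by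
  refine ⟨fun ⟨z, hz⟩ => ?_, ?_⟩
  · rw [show L ++ a :: b :: R = (L ++ [a]) ++ b :: R by simp, List.infix_append_iff_ne_nil] at hz
    rcases hz with h | h | ⟨l₁, l₂, h₁, h₂, hl, hs, hp⟩
    · exact Or.inl ⟨z, h⟩
    · exact Or.inr ⟨z, h⟩
    · have hz : ∀ c ∈ l₁ ++ l₂, c = z := fun c hc => List.eq_of_mem_replicate (hl ▸ hc)
      have haz : a = z := by
        simpa [hs.getLast h₁] using hz _ (List.mem_append_left _ (List.getLast_mem h₁))
      have hbz : b = z := by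
        simpa [hp.head h₂] using hz _ (List.mem_append_right _ (List.head_mem h₂))
      exact absurd (haz.trans hbz.symm) hab
  · rintro (h | h)
    · exact h.mono ⟨[], b :: R, by simp⟩
    · exact h.mono ⟨L ++ [a], [], by simp⟩

theorem hasRun_append_pair_append_iff {P u : List α} {a b : α} (hab : a ≠ b) (hk : 2 ≤ k)
    (hP : ¬ HasRun k (P ++ [a])) : HasRun k (P ++ [a, b] ++ a :: u) ↔ HasRun k (a :: u) := by
  have hb : ¬ HasRun k ([] ++ [b]) := fun h => by simpa using h.le_length.trans' hk
  rw [List.append_assoc, List.cons_append, List.cons_append, List.nil_append,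
    hasRun_append_cons_cons_iff hab, or_iff_right hP, ← List.nil_append (b :: a :: u),
    hasRun_append_cons_cons_iff hab.symm, or_iff_right hb]

theorem hasRun_filter_of_forall_not_mem (hk : 1 ≤ k) {i : α} {π rest : List α} {p : α → Bool}
    (hpi : p i) (hπ : ∀ z ∈ π, ¬ p z) :
    HasRun k ((List.replicate (k - 1) i ++ π ++ [i] ++ rest).filter p) := by
  obtain ⟨m, rfl⟩ : ∃ m, k = m + 1 := ⟨k - 1, by omega⟩
  refine ⟨i, [], rest.filter p, ?_⟩
  simp [hpi, List.filter_eq_nil_iff.mpr hπ, List.replicate_succ']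

section DecidableEq

variable [DecidableEq α]

theorem not_hasRun_append_singleton_of_nodup (hk : 3 ≤ k) {B : List α} (hB : B.Nodup) (c : α) :
    ¬ HasRun k (B ++ [c]) := by
  intro h
  obtain ⟨z, hz⟩ := h.exists_le_count
  have hBz := List.nodup_iff_count_le_one.mp hB z
  have hcz : [c].count z ≤ 1 := List.count_le_length.trans_eq rfl
  rw [List.count_append] at hz
  omega

theorem not_hasRun_replicate_append (hk : 3 ≤ k) {i : α} {B : List α} (hB : B.Nodup)
    (hiB : i ∉ B) (hB₀ : B ≠ []) (c : α) :
    ¬ HasRun k (List.replicate (k - 1) i ++ B ++ [i, c]) := by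
  obtain ⟨B', o, rfl⟩ := (List.eq_nil_or_concat B).resolve_left hB₀
  rw [List.concat_eq_append] at hB hiB ⊢
  have hoi : o ≠ i := fun h => hiB (by simp [h])
  rw [show List.replicate (k - 1) i ++ (B' ++ [o]) ++ [i, c] =
    (List.replicate (k - 1) i ++ B') ++ o :: i :: [c] by simp, hasRun_append_cons_cons_iff hoi]
  rintro (h | h)
  · obtain ⟨z, hz⟩ := h.exists_le_count
    have hBz := List.nodup_iff_count_le_one.mp hB z
    rw [List.append_assoc, List.count_append, List.count_replicate] at hz
    split_ifs at hz with hiz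
    · have hz₀ : (B' ++ [o]).count z = 0 :=
        List.count_eq_zero.mpr (by simpa [← beq_iff_eq.mp hiz] using hiB)
      omega
    · omega
  · simpa using h.le_length.trans' hk

theorem not_hasRun_filter_prefix (hk : 3 ≤ k) {i : α} {π : List α} (hπ : π.Nodup) (hiπ : i ∉ π)
    {p : α → Bool} (hp : p i → ∃ z ∈ π, p z) (c : α) :
    ¬ HasRun k ((List.replicate (k - 1) i ++ π ++ [i]).filter p ++ [c]) := by
  by_cases hpi : p i
  · obtain ⟨z, hzπ, hpz⟩ := hp hpi
    simp only [List.filter_append, List.filter_replicate, List.filter_singleton, hpi]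
    have hπp : π.filter p ≠ [] := List.ne_nil_of_mem (List.mem_filter.mpr ⟨hzπ, hpz⟩)
    simpa using not_hasRun_replicate_append hk (hπ.filter p)
      (fun h => hiπ (List.mem_filter.mp h).1) hπp c
  · simp only [List.filter_append, List.filter_replicate, List.filter_singleton, hpi]
    simpa using not_hasRun_append_singleton_of_nodup hk (hπ.filter p) c

end DecidableEq

end Runs

theorem red_eq_replicate_one_iff {L : List ℕ} :
    red L = List.replicate L.length 1 ↔ ∀ x ∈ L, ∀ y ∈ L, x = y := by
  unfold red
  rw [List.map_eq_replicate_iff]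
  simp only [Finset.card_eq_zero, Nat.add_eq_right, Finset.filter_eq_empty_iff,
    List.mem_toFinset, not_lt]
  exact ⟨fun h x hx y hy => le_antisymm (h x hx hy) (h y hy hx),
    fun h x hx y hy => (h x hx y hy).le⟩

theorem red_replicate (m x : ℕ) : red (List.replicate m x) = List.replicate m 1 := by
  simpa using red_eq_replicate_one_iff.mpr fun a ha b hb =>
    (List.eq_of_mem_replicate ha).trans (List.eq_of_mem_replicate hb).symm

theorem hasMatch_replicate_one_iff {k : ℕ} {v : List ℕ} :
    HasMatch (List.replicate k 1) v ↔ HasRun k v := by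
  unfold HasMatch
  simp only [List.length_replicate, red_replicate]
  constructor
  · rintro ⟨i, hi, h⟩
    set L := (v.drop i).take k
    have hL : L.length = k := by simp [L]; omega
    refine ⟨L.headD 0, ?_⟩
    have hL' : L = List.replicate k (L.headD 0) := by
      have hall := red_eq_replicate_one_iff.mp (hL ▸ h)
      rcases hc : L with _ | ⟨c, l⟩
      · simp [← hL, hc]
      · rw [← hL, hc, List.eq_replicate_iff]
        rw [hc] at hall
        exact ⟨rfl, fun b hb => hall b hb c (by simp)⟩
    exact hL' ▸ (List.take_prefix _ _).isInfix.trans (List.drop_suffix _ _).isInfix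
  · rintro ⟨x, s, t, rfl⟩
    refine ⟨s.length, by simp, ?_⟩
    simp [red_replicate]

theorem mem_initPerm : ∀ {l : List ℕ} {x : ℕ}, x ∈ initPerm l ↔ x ∈ l
  | [], x => by rw [initPerm]
  | a :: l, x => by
    rw [initPerm, List.mem_cons, List.mem_cons, mem_initPerm, List.mem_filter]
    by_cases hxa : x = a <;> simp [hxa]
  termination_by l => l.length
  decreasing_by exact Nat.lt_succ_of_le (List.length_filter_le _ _)

theorem initPerm_filter (p : ℕ → Bool) : ∀ l : List ℕ,
    initPerm (l.filter p) = (initPerm l).filter p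
  | [] => by simp [initPerm]
  | a :: l => by
    have ih := initPerm_filter p (l.filter (fun x => x ≠ a))
    rw [List.filter_comm] at ih
    by_cases hpa : p a
    · rw [List.filter_cons_of_pos hpa, initPerm, initPerm, List.filter_cons_of_pos hpa, ih]
    · rw [List.filter_cons_of_neg hpa, initPerm, List.filter_cons_of_neg hpa, ← ih]
      congr 1
      refine (List.filter_eq_self.mpr fun b hb => ?_).symm
      rw [List.mem_filter] at hb
      simpa using fun hba : b = a => hpa (hba ▸ hb.2)
  termination_by l => l.length
  decreasing_by all_goals exact Nat.lt_succ_of_le (List.length_filter_le _ _)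

theorem initPerm_cons_eq_pair {a b : ℕ} {u : List ℕ} (hab : a ≠ b) (hb : b ∈ u)
    (hu : ∀ z ∈ u, z = a ∨ z = b) : initPerm (a :: u) = [a, b] := by
  obtain ⟨c, v, hcv⟩ : ∃ c v, u.filter (fun x => x ≠ a) = c :: v :=
    List.exists_cons_of_ne_nil
      (List.ne_nil_of_mem (List.mem_filter.mpr ⟨hb, by simpa using hab.symm⟩))
  have hrest : ∀ z ∈ c :: v, z = b := by
    intro z hz
    rw [← hcv, List.mem_filter] at hz
    simpa using (hu z hz.1).resolve_left (by simpa using hz.2)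
  have hv : v.filter (fun x => x ≠ c) = [] := by
    simp only [List.filter_eq_nil_iff]
    intro z hz
    simp [hrest z (by simp [hz]), hrest c (by simp)]
  rw [initPerm, hcv, initPerm, hv, initPerm, hrest c (by simp)]

theorem exists_initPerm_eq_pair {v : List ℕ} {x y : ℕ} (hxy : x ≠ y) (hx : x ∈ v) (hy : y ∈ v)
    (hv : ∀ z ∈ v, z = x ∨ z = y) : ∃ a b u, a ≠ b ∧ v = a :: u ∧ initPerm v = [a, b] := by
  obtain ⟨a, u, rfl⟩ := List.exists_cons_of_ne_nil (List.ne_nil_of_mem hx)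
  rcases hv a List.mem_cons_self with rfl | rfl
  · exact ⟨a, y, u, hxy, rfl, initPerm_cons_eq_pair hxy (by simpa [hxy.symm] using hy)
      fun z hz => hv z (List.mem_cons_of_mem _ hz)⟩
  · exact ⟨a, x, u, hxy.symm, rfl, initPerm_cons_eq_pair hxy.symm (by simpa [hxy] using hx)
      fun z hz => (hv z (List.mem_cons_of_mem _ hz)).symm⟩

theorem mem_replicate_append_initPerm_append_iff {k i x : ℕ} {π w : List ℕ} (hi : i ∈ w)
    (hπ : ∀ z ∈ π, z ∈ w) :
    x ∈ List.replicate (k - 1) i ++ π ++ [i] ++ initPerm w ++ w ↔ x ∈ w := by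
  refine ⟨fun hx => ?_, fun hx => List.mem_append_right _ hx⟩
  simp only [List.mem_append, List.mem_replicate, List.mem_singleton, mem_initPerm] at hx
  rcases hx with (((⟨-, rfl⟩ | hx) | rfl) | hx) | hx
  exacts [hi, hπ x hx, hi, hx, hx]

theorem hasRun_filter_prefix_append_initPerm_append_iff {k i x y : ℕ} (hk : 3 ≤ k)
    {π w : List ℕ} (hπ : π.Nodup) (hiπ : i ∉ π)
    (hxy : x ≠ y) (hx : x ∈ w) (hy : y ∈ w) (hp : i = x ∨ i = y → ∃ z ∈ π, z = x ∨ z = y) :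
    HasRun k ((List.replicate (k - 1) i ++ π ++ [i] ++ initPerm w ++ w).filter
        (fun z => z = x ∨ z = y)) ↔
      HasRun k (w.filter (fun z => z = x ∨ z = y)) := by
  obtain ⟨a, b, u, hab, hu, hinit⟩ := exists_initPerm_eq_pair
    (v := w.filter (fun z => z = x ∨ z = y)) hxy (by simpa using hx) (by simpa using hy) (by simp)
  rw [List.filter_append, List.filter_append, ← initPerm_filter, hinit, hu]
  exact hasRun_append_pair_append_iff hab (by omega)
    (not_hasRun_filter_prefix hk hπ hiπ (by simpa using hp) a)

theorem remove_edge_one_pow_k_general (k n : ℕ) (hk : 3 ≤ k)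
    (E : ℕ → ℕ → Prop)
    (w : List ℕ) (hw : Represents (List.replicate k 1) w (Finset.Icc 1 n) E)
    (i j : ℕ) (hi : i ∈ Finset.Icc 1 n)
    (π : List ℕ)
    (hπ : π.Perm ((((Finset.Icc 1 n).erase i).erase j).sort (· ≤ ·))) :
    Represents (List.replicate k 1)
      (List.replicate (k - 1) i ++ π ++ [i] ++ initPerm w ++ w)
      (Finset.Icc 1 n)
      (fun x y => E x y ∧ ¬ ((x = i ∧ y = j) ∨ (x = j ∧ y = i))) := by
  obtain ⟨hwV, hwE⟩ := hw
  have hπmem : ∀ z, z ∈ π ↔ z ∈ Finset.Icc 1 n ∧ z ≠ i ∧ z ≠ j := fun z => by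
    rw [hπ.mem_iff, Finset.mem_sort, Finset.mem_erase, Finset.mem_erase]
    tauto
  have hπnd : π.Nodup := hπ.nodup_iff.mpr (Finset.sort_nodup _ _)
  refine ⟨fun x => ?_, fun x hx y hy hxy => ?_⟩
  · rw [mem_replicate_append_initPerm_append_iff ((hwV i).mpr hi)
      fun z hz => (hwV z).mpr ((hπmem z).mp hz).1, hwV]
  simp only [hasMatch_replicate_one_iff] at hwE ⊢
  rw [hwE x hx y hy hxy]
  by_cases hxyij : (x = i ∧ y = j) ∨ (x = j ∧ y = i)
  · simp only [hxyij, not_true_eq_false, and_false, false_iff, not_not]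
    have hxyπ : ∀ z ∈ π, ¬ (z = x ∨ z = y) := fun z hz => by
      have := (hπmem z).mp hz
      rcases hxyij with ⟨rfl, rfl⟩ | ⟨rfl, rfl⟩ <;> tauto
    rw [List.append_assoc _ (initPerm w)]
    exact hasRun_filter_of_forall_not_mem (by omega) (by simp only [decide_eq_true_eq]; tauto)
      (by simpa using hxyπ)
  · rw [and_iff_left hxyij, hasRun_filter_prefix_append_initPerm_append_iff hk hπnd
      (fun h => ((hπmem i).mp h).2.1 rfl) hxy ((hwV x).mpr hx) ((hwV y).mpr hy)]
    rintro (rfl | rfl)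
    · exact ⟨y, (hπmem y).mpr ⟨hy, Ne.symm hxy, fun h => hxyij (Or.inl ⟨rfl, h⟩)⟩, Or.inr rfl⟩
    · exact ⟨x, (hπmem x).mpr ⟨hx, hxy, fun h => hxyij (Or.inr ⟨h, rfl⟩)⟩, Or.inl rfl⟩

/-- if `w` `1^k`-represents `G = ([n], E)` (`k ≥ 3`), `ij` is an edge of `G`,
and `π` is any permutation of `[n] \ {i, j}`, then `i^{k-1} π i p(w) w`
`1^k`-represents `G' = ([n], E \ {ij})`. -/
theorem remove_edge_one_pow_k (k n : ℕ) (hk : 3 ≤ k)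
    (E : ℕ → ℕ → Prop) (hsym : Symmetric E) (hirr : ∀ x, ¬ E x x)
    (w : List ℕ) (hw : Represents (List.replicate k 1) w (Finset.Icc 1 n) E)
    (i j : ℕ) (hi : i ∈ Finset.Icc 1 n) (hj : j ∈ Finset.Icc 1 n) (hij : i ≠ j)
    (he : E i j)
    (π : List ℕ)
    (hπ : π.Perm ((((Finset.Icc 1 n).erase i).erase j).sort (· ≤ ·))) :
    Represents (List.replicate k 1)
      (List.replicate (k - 1) i ++ π ++ [i] ++ initPerm w ++ w)
      (Finset.Icc 1 n)
      (fun x y => E x y ∧ ¬ ((x = i ∧ y = j) ∨ (x = j ∧ y = i))) :=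
  remove_edge_one_pow_k_general k n hk E w hw i j hi π hπ
end

section
/- For any fixed k ≥ 3, every labeled graph G = ([n], E) is 1^k-representable, i.e., there exists a word w over [n] in which every letter of [n] occurs and such that for all distinct x, y in [n], xy is an edge of G if and only if the word w_{{x,y}} contains no k consecutive equal letters. -/
/-!
Write the vertices once in increasing order, then for every non-adjacent pair `(x, y)` append
the gadget `y (x Z)^(k-1) x y`, where `Z` lists the remaining vertices. Restricted to `{x, y}`
the gadget contains `x^k`. Restricted to any other pair `{a, b}` it becomes an alternating word,
or `y z^(k-1) y`. Like the initial segment, each such block begins and ends with two distinct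
letters and has no run of length `k`, so for `k ≥ 3` their concatenation has none either.
-/

open List

namespace OnePowRepresentation

theorem red_replicate (k c : ℕ) : red (replicate k c) = replicate k 1 := by
  simp [red, map_replicate]

theorem eq_replicate_of_red_eq_replicate {l : List ℕ} {k : ℕ} (h : red l = replicate k 1) :
    ∃ c, l = replicate k c := by
  have hlen : l.length = k := by simpa [red] using congrArg length h
  have hmin : ∀ x ∈ l, ∀ y ∈ l, x ≤ y := by
    intro x hx y hy
    have hx1 : (l.toFinset.filter (· < x)).card + 1 ∈ replicate k 1 :=
      h ▸ mem_map_of_mem hx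
    simp only [mem_replicate, Nat.add_eq_right, Finset.card_eq_zero, Finset.filter_eq_empty_iff,
      mem_toFinset, not_lt] at hx1
    exact hx1.2 hy
  rcases l with _ | ⟨c, l⟩
  · exact ⟨0, by simp [← hlen]⟩
  · exact ⟨c, eq_replicate_iff.mpr ⟨hlen, fun b hb =>
      le_antisymm (hmin b hb c mem_cons_self) (hmin c mem_cons_self b hb)⟩⟩

theorem hasMatch_replicate_one_iff (k : ℕ) (v : List ℕ) :
    HasMatch (replicate k 1) v ↔ ∃ c, replicate k c <:+: v := by
  constructor
  · rintro ⟨i, -, hred⟩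
    rw [length_replicate, red_replicate] at hred
    obtain ⟨c, hc⟩ := eq_replicate_of_red_eq_replicate hred
    exact ⟨c, hc ▸ (take_prefix _ _).isInfix.trans (drop_suffix i v).isInfix⟩
  · rintro ⟨c, s, t, rfl⟩
    refine ⟨s.length, by simp, ?_⟩
    rw [length_replicate, append_assoc, drop_left, take_left' (by simp), red_replicate,
      red_replicate]

variable {α : Type*}

theorem pair_prefix_replicate {m : ℕ} (hm : 2 ≤ m) (c : α) : [c, c] <+: replicate m c :=
  ⟨replicate (m - 2) c, by
    rw [show [c, c] = replicate 2 c from rfl, ← replicate_add]; congr 1; omega⟩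

theorem pair_suffix_replicate {m : ℕ} (hm : 2 ≤ m) (c : α) : [c, c] <:+ replicate m c :=
  ⟨replicate (m - 2) c, by
    rw [show [c, c] = replicate 2 c from rfl, ← replicate_add]; congr 1; omega⟩

def IsBlock (k : ℕ) (P : List α) : Prop :=
  (∃ a b t, a ≠ b ∧ P = a :: b :: t) ∧ (∃ a b s, a ≠ b ∧ P = s ++ [a, b]) ∧
    ∀ c, ¬ replicate k c <:+: P

namespace IsBlock

variable {k : ℕ} {P : List α}

theorem not_pair_prefix_append (hP : IsBlock k P) (c : α) (R : List α) :
    ¬ [c, c] <+: P ++ R := by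
  obtain ⟨⟨a, b, t, hab, rfl⟩, -⟩ := hP
  simp only [cons_append, cons_prefix_cons, nil_prefix, and_true, not_and]
  rintro rfl rfl
  exact hab rfl

theorem not_pair_suffix (hP : IsBlock k P) (c : α) : ¬ [c, c] <:+ P := by
  obtain ⟨-, ⟨a, b, s, hab, rfl⟩, -⟩ := hP
  intro h
  have := (suffix_of_suffix_length_le h (suffix_append s [a, b]) le_rfl).eq_of_length rfl
  simp only [cons.injEq, and_true] at this
  exact hab (this.1 ▸ this.2)

end IsBlock

theorem not_pair_prefix_flatten {k : ℕ} {L : List (List α)} (hL : ∀ P ∈ L, IsBlock k P)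
    (c : α) : ¬ [c, c] <+: L.flatten := by
  cases L with
  | nil => simp
  | cons P L => exact (hL P mem_cons_self).not_pair_prefix_append c _

/-- Adjacent blocks meet in runs of length at most two. -/
theorem not_replicate_infix_flatten {k : ℕ} (hk : 3 ≤ k) {L : List (List α)}
    (hL : ∀ P ∈ L, IsBlock k P) (c : α) : ¬ replicate k c <:+: L.flatten := by
  induction L with
  | nil => simp; omega
  | cons P L ih =>
    have hL' : ∀ Q ∈ L, IsBlock k Q := fun Q hQ => hL Q (mem_cons_of_mem P hQ)
    rw [flatten_cons, infix_append_iff]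
    rintro (hP | hL | ⟨u, v, huv, hu, hv⟩)
    · exact (hL P mem_cons_self).2.2 c hP
    · exact ih hL' hL
    · obtain ⟨hlen, hu', hv'⟩ := append_eq_replicate_iff.mp huv.symm
      have hu2 : u.length < 2 := by
        by_contra!
        exact (hL P mem_cons_self).not_pair_suffix c
          ((hu' ▸ pair_suffix_replicate this c : [c, c] <:+ u).trans hu)
      have hv2 : v.length < 2 := by
        by_contra!
        exact not_pair_prefix_flatten hL' c
          ((hv' ▸ pair_prefix_replicate this c : [c, c] <+: v).trans hv)
      omega

theorem isBlock_of_isChain {k : ℕ} (hk : 2 ≤ k) {P : List α} (hP : IsChain (· ≠ ·) P)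
    (hlen : 2 ≤ P.length) : IsBlock k P := by
  refine ⟨?_, ?_, fun c hc => ?_⟩
  · match P, hP, hlen with
    | a :: b :: t, hP, _ => exact ⟨a, b, t, (isChain_cons_cons.mp hP).1, rfl⟩
  · have hR : IsChain (· ≠ ·) P.reverse := isChain_reverse.mpr (hP.imp fun _ _ h => h.symm)
    match h : P.reverse, hR, (length_reverse (as := P)) ▸ hlen with
    | b :: a :: s, hR, _ =>
      exact ⟨a, b, s.reverse, (isChain_cons_cons.mp hR).1.symm, by
        rw [← reverse_reverse P, h]; simp⟩
  · have := hP.infix ((pair_prefix_replicate hk c).isInfix.trans hc)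
    simp at this

theorem isChain_ne_alternating {u v : α} (huv : u ≠ v) (m : ℕ) :
    IsChain (· ≠ ·) ((replicate m [u, v]).flatten ++ [u]) := by
  induction m with
  | zero => simp
  | succ m ih =>
    rw [replicate_succ, flatten_cons]
    cases m <;> simp_all [replicate_succ, Ne.symm huv]

variable [DecidableEq α]

theorem isBlock_sandwich {k : ℕ} (hk : 3 ≤ k) {y z : α} (hyz : y ≠ z) :
    IsBlock k (y :: (replicate (k - 1) z ++ [y])) := by
  obtain ⟨m, hm⟩ : ∃ m, k - 1 = m + 1 := ⟨k - 2, by omega⟩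
  refine ⟨⟨y, z, replicate m z ++ [y], hyz, by simp [hm, replicate_succ]⟩,
    ⟨z, y, y :: replicate m z, hyz.symm, by simp [hm, replicate_succ']⟩, fun c hc => ?_⟩
  have hcount := hc.count_le c
  simp only [count_replicate_self, count_cons, count_append, count_replicate, count_nil,
    beq_iff_eq] at hcount
  split_ifs at hcount with hz hy <;> first | omega | exact hyz (hy.trans hz.symm)

def gadget (k : ℕ) (L : List α) (x y : α) : List α :=
  y :: ((replicate (k - 1) (x :: L.filter fun z => z ≠ x ∧ z ≠ y)).flatten ++ [x, y])

def word (k : ℕ) (L : List α) (ps : List (α × α)) : List α :=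
  L ++ (ps.map fun q => gadget k L q.1 q.2).flatten

theorem filter_gadget (k : ℕ) (L : List α) (x y : α) (p : α → Bool) :
    (gadget k L x y).filter p = [y].filter p ++
      ((replicate (k - 1) ((x :: L.filter fun z => z ≠ x ∧ z ≠ y).filter p)).flatten ++
        [x, y].filter p) := by
  rw [gadget, ← singleton_append, filter_append, filter_append, filter_flatten, map_replicate]

theorem filter_word (k : ℕ) (L : List α) (ps : List (α × α)) (p : α → Bool) :
    (word k L ps).filter p =
      (L.filter p :: ps.map fun q => (gadget k L q.1 q.2).filter p).flatten := by
  simp [word, filter_flatten, Function.comp_def]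

theorem mem_gadget {k : ℕ} {L : List α} {x y t : α} (ht : t ∈ gadget k L x y) :
    t = x ∨ t = y ∨ t ∈ L := by
  simp only [gadget, mem_cons, mem_append, mem_flatten, mem_replicate] at ht
  grind

theorem replicate_infix_filter_gadget {k : ℕ} (hk : 1 ≤ k) (L : List α) {x y : α}
    {p : α → Bool} (hx : p x) (hy : p y) (hp : ∀ z, p z → z = x ∨ z = y) :
    replicate k x <:+: (gadget k L x y).filter p := by
  have hZ : (L.filter fun z => z ≠ x ∧ z ≠ y).filter p = [] := by
    simp only [filter_eq_nil_iff, mem_filter]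
    grind
  obtain ⟨m, rfl⟩ : ∃ m, k = m + 1 := ⟨k - 1, by omega⟩
  rw [filter_gadget, filter_cons_of_pos hx, hZ]
  refine ⟨[y].filter p, [y], ?_⟩
  simp [hx, hy, replicate_succ']

theorem isBlock_filter_gadget {k : ℕ} (hk : 3 ≤ k) {L : List α} (hL : L.Nodup) {a b x y : α}
    (hab : a ≠ b) (ha : a ∈ L) (hb : b ∈ L) (hxy : x ≠ y)
    (hne : ¬ (x = a ∧ y = b ∨ x = b ∧ y = a)) :
    IsBlock k ((gadget k L x y).filter fun t => t = a ∨ t = b) := by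
  -- `M` is one period `x Z` of the gadget, restricted to `{a, b}`
  set M := (x :: L.filter fun z => z ≠ x ∧ z ≠ y).filter fun t => t = a ∨ t = b with hM
  have hMnd : M.Nodup := (nodup_cons.mpr ⟨by simp, hL.filter _⟩).filter _
  rw [filter_gadget, ← hM]
  by_cases hy : y = a ∨ y = b
  · obtain ⟨z, hzy, hz⟩ : ∃ z, z ≠ y ∧ ∀ t, t ∈ M ↔ t = z := by
      rcases hy with rfl | rfl
      exacts [⟨b, hab.symm, fun t => by simp [M]; grind⟩,
        ⟨a, hab, fun t => by simp [M]; grind⟩]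
    have hMz : M = [z] :=
      perm_singleton.mp ((perm_ext_iff_of_nodup hMnd (nodup_singleton z)).mpr (by simpa using hz))
    have hx : ¬ (x = a ∨ x = b) := by grind
    convert isBlock_sandwich hk hzy.symm using 1
    simp [hMz, hx, hy]
  · obtain ⟨u, v, huv, hMuv⟩ : ∃ u v, u ≠ v ∧ M = [u, v] := by
      have : [a, b] ~ M := (perm_ext_iff_of_nodup (by simp [hab]) hMnd).mpr (by grind)
      rcases pair_perm.mp this with h | h
      exacts [⟨a, b, hab, h⟩, ⟨b, a, hab.symm, h⟩]
    have hchain := isChain_ne_alternating huv (k - 1)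
    have hlen : 2 ≤ ((replicate (k - 1) [u, v]).flatten).length := by simp; omega
    by_cases hx : x = a ∨ x = b
    · have hux : u = x := by
        rw [hM, filter_cons_of_pos (by simpa using hx)] at hMuv
        exact (cons.inj hMuv).1.symm
      subst hux
      convert isBlock_of_isChain (k := k) (by omega) hchain (by simp at hlen ⊢; omega)
        using 1
      simp [hMuv, hx, hy]
    · convert isBlock_of_isChain (k := k) (by omega)
        (hchain.infix (prefix_append _ _).isInfix) hlen using 1
      simp [hMuv, hx, hy]

theorem mem_word {k : ℕ} {L : List α} {ps : List (α × α)}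
    (hps : ∀ q ∈ ps, q.1 ∈ L ∧ q.2 ∈ L) (t : α) : t ∈ word k L ps ↔ t ∈ L := by
  refine ⟨fun ht => ?_, mem_append_left _⟩
  rcases mem_append.mp ht with ht | ht
  · exact ht
  · obtain ⟨_, hG, htG⟩ := mem_flatten.mp ht
    obtain ⟨q, hq, rfl⟩ := mem_map.mp hG
    rcases mem_gadget htG with rfl | rfl | ht
    exacts [(hps q hq).1, (hps q hq).2, ht]

theorem isBlock_filter_pair {k : ℕ} (hk : 2 ≤ k) {L : List α} (hL : L.Nodup) {a b : α}
    (hab : a ≠ b) (ha : a ∈ L) (hb : b ∈ L) :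
    IsBlock k (L.filter fun t => t = a ∨ t = b) :=
  isBlock_of_isChain hk (hL.filter _).isChain
    (subperm_of_subset (nodup_cons.mpr ⟨by simpa using hab, nodup_singleton b⟩)
      (fun t ht => by simp at ht; rcases ht with rfl | rfl <;> simp [*])).length_le

theorem represents_word {k : ℕ} (hk : 3 ≤ k) {L : List ℕ} (hL : L.Nodup) {V : Finset ℕ}
    (hLV : ∀ x, x ∈ L ↔ x ∈ V) {E : ℕ → ℕ → Prop} (hsym : ∀ x y, E x y → E y x)
    {ps : List (ℕ × ℕ)}
    (hps : ∀ q ∈ ps, q.1 ∈ L ∧ q.2 ∈ L ∧ q.1 ≠ q.2 ∧ ¬ E q.1 q.2)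
    (hnon : ∀ x ∈ L, ∀ y ∈ L, x ≠ y → ¬ E x y → (x, y) ∈ ps) :
    Represents (replicate k 1) (word k L ps) V E := by
  refine ⟨fun t => (mem_word (fun q hq => ⟨(hps q hq).1, (hps q hq).2.1⟩) t).trans (hLV t),
    fun a ha b hb hab => ?_⟩
  rw [← hLV] at ha hb
  rw [hasMatch_replicate_one_iff, filter_word]
  constructor
  · rintro hE ⟨c, hc⟩
    refine not_replicate_infix_flatten hk (fun P hP => ?_) c hc
    rcases mem_cons.mp hP with rfl | hP
    · exact isBlock_filter_pair (by omega) hL hab ha hb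
    · obtain ⟨q, hq, rfl⟩ := mem_map.mp hP
      obtain ⟨-, -, hq12, hqE⟩ := hps q hq
      refine isBlock_filter_gadget hk hL hab ha hb hq12 ?_
      rintro (⟨h1, h2⟩ | ⟨h1, h2⟩)
      · exact hqE (h1 ▸ h2 ▸ hE)
      · exact hqE (h1 ▸ h2 ▸ hsym a b hE)
  · intro hno
    by_contra hE
    have hmatch : replicate k a <:+: (gadget k L a b).filter fun t => t = a ∨ t = b :=
      replicate_infix_filter_gadget (by omega) L (by simp) (by simp) (by simp)
    refine hno ⟨a, hmatch.trans (infix_of_mem_flatten ?_)⟩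
    exact mem_cons_of_mem _ (mem_map_of_mem (hnon a ha b hb hab hE))

end OnePowRepresentation

open OnePowRepresentation in
theorem every_graph_one_pow_k_representable_general (k : ℕ) (hk : 3 ≤ k)
    (n : ℕ) (E : ℕ → ℕ → Prop) (hsym : Symmetric E) :
    ∃ w, Represents (List.replicate k 1) w (Finset.Icc 1 n) E := by
  classical
  refine ⟨word k (range' 1 n)
      ((range' 1 n ×ˢ range' 1 n).filter fun q => q.1 ≠ q.2 ∧ ¬ E q.1 q.2),
    represents_word hk nodup_range' (fun x => ?_) hsym (fun q hq => ?_)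
      (fun x hx y hy hxy hE => ?_)⟩
  · simp [mem_range'_1]
    omega
  · obtain ⟨x, y⟩ := q
    simp_all
  · simp_all

/-- for any fixed `k ≥ 3`, every labeled graph `G = ([n], E)` is
`1^k`-representable. -/
theorem every_graph_one_pow_k_representable (k : ℕ) (hk : 3 ≤ k)
    (n : ℕ) (E : ℕ → ℕ → Prop) (hsym : Symmetric E) (hirr : ∀ x, ¬ E x x)
    (hsupp : ∀ x y, E x y → x ∈ Finset.Icc 1 n ∧ y ∈ Finset.Icc 1 n) :
    ∃ w, Represents (List.replicate k 1) w (Finset.Icc 1 n) E :=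
  every_graph_one_pow_k_representable_general k hk n E hsym
end

section
/- Let u = 1^a 2^b 1 v where a, b ≥ 1 and v is any (possibly empty) word over {1,2}, and let k = |u|. Suppose the word w u-represents the labeled graph G = ([n], E), and let ij be an edge of G with i < j. Then the word w' = u[i,j] 1^{b+1} 2^{b+1} ... n^{b+1} w u-represents the graph G' = ([n], E \ {ij}), where u[i,j] is obtained from u by substituting i for every 1 and j for every 2, and x^{b+1} denotes b+1 copies of the letter x. -/
lemma red_length (w : List ℕ) : (red w).length = w.length := by simp [red]

lemma red_two {m M : ℕ} (hmM : m < M) {f : List ℕ} (hf : ∀ z ∈ f, z = m ∨ z = M)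
    (hm : m ∈ f) (hM : M ∈ f) :
    red f = f.map (fun z => if z = m then 1 else 2) := by
  unfold red
  apply List.map_congr_left
  intro z hz
  rcases hf z hz with rfl | rfl
  · rw [if_pos rfl]
    have h0 : f.toFinset.filter (· < z) = ∅ := by
      ext w
      simp only [Finset.mem_filter, List.mem_toFinset, Finset.notMem_empty, iff_false, not_and]
      intro hw hlt
      rcases hf w hw with rfl | rfl <;> omega
    rw [h0]; simp
  · rw [if_neg hmM.ne']
    have h1 : f.toFinset.filter (· < z) = {m} := by
      ext w
      simp only [Finset.mem_filter, List.mem_toFinset, Finset.mem_singleton]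
      constructor
      · rintro ⟨hw, hlt⟩
        rcases hf w hw with rfl | rfl
        · rfl
        · omega
      · rintro rfl; exact ⟨hm, hmM⟩
    rw [h1]; simp

lemma red_const {c : ℕ} {f : List ℕ} (h : ∀ z ∈ f, z = c) :
    red f = List.replicate f.length 1 := by
  unfold red
  rw [List.eq_replicate_iff]
  refine ⟨by simp, ?_⟩
  intro z hz
  rw [List.mem_map] at hz
  obtain ⟨x, hx, rfl⟩ := hz
  have h0 : f.toFinset.filter (· < x) = ∅ := by
    ext w
    simp only [Finset.mem_filter, List.mem_toFinset, Finset.notMem_empty, iff_false, not_and]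
    intro hw hlt
    have := h w hw; have := h x hx; omega
  rw [h0]; simp
open List in
def U (a b : ℕ) (v : List ℕ) : List ℕ := List.replicate a 1 ++ List.replicate b 2 ++ 1 :: v

variable {a b : ℕ} {v : List ℕ}

lemma U_mem (hv : ∀ x ∈ v, x = 1 ∨ x = 2) : ∀ z ∈ U a b v, z = 1 ∨ z = 2 := by
  intro z hz
  simp only [U, List.mem_append, List.mem_replicate, List.mem_cons] at hz
  rcases hz with (⟨_, rfl⟩ | ⟨_, rfl⟩) | (rfl | hz)
  · exact Or.inl rfl
  · exact Or.inr rfl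
  · exact Or.inl rfl
  · exact hv z hz

lemma U_one_mem : 1 ∈ U a b v := by simp [U]

lemma U_two_mem (hb : 1 ≤ b) : 2 ∈ U a b v := by
  simp [U, List.mem_replicate]
  omega

lemma U_length : (U a b v).length = a + b + 1 + v.length := by simp [U]; omega

lemma U_get1 {q : ℕ} (hq : q < a) : (U a b v)[q]? = some 1 := by
  rw [U, List.getElem?_append_left (by simp; omega), List.getElem?_append_left (by simp; omega)]
  simp [hq]

lemma U_get2 {q : ℕ} (hq : q < b) : (U a b v)[a + q]? = some 2 := by
  rw [U, List.getElem?_append_left (by simp; omega), List.getElem?_append_right (by simp)]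
  simp [hq]

lemma U_get3 : (U a b v)[a + b]? = some 1 := by
  rw [U, List.getElem?_append_right (by simp)]
  simp

lemma red_U (ha : 1 ≤ a) (hb : 1 ≤ b) (hv : ∀ x ∈ v, x = 1 ∨ x = 2) :
    red (U a b v) = U a b v := by
  rw [red_two one_lt_two (U_mem hv) U_one_mem (U_two_mem hb)]
  nth_rewrite 2 [← List.map_id (U a b v)]
  apply List.map_congr_left
  intro z hz
  rcases U_mem hv z hz with rfl | rfl <;> simp

lemma red_eq_red_U (ha : 1 ≤ a) (hb : 1 ≤ b) (hv : ∀ x ∈ v, x = 1 ∨ x = 2)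
    {m M : ℕ} (hmM : m < M) {f : List ℕ} (hf : ∀ z ∈ f, z = m ∨ z = M)
    (h : red f = red (U a b v)) :
    f = (U a b v).map (fun z => if z = 1 then m else M) := by
  rw [red_U ha hb hv] at h
  by_cases hm : m ∈ f
  · by_cases hM : M ∈ f
    · rw [red_two hmM hf hm hM] at h
      have key : (f.map (fun z => if z = m then 1 else 2)).map
          (fun z => if z = 1 then m else M) = f := by
        rw [List.map_map]
        nth_rewrite 2 [← List.map_id f]
        apply List.map_congr_left
        intro z hz
        rcases hf z hz with rfl | rfl <;> simp [Function.comp, hmM.ne']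
      rw [← key, h]
    · have hc : ∀ z ∈ f, z = m := by
        intro z hz
        rcases hf z hz with rfl | rfl
        · rfl
        · exact absurd hz hM
      rw [red_const hc] at h
      have h2 : (2 : ℕ) ∈ List.replicate f.length 1 := h ▸ U_two_mem hb
      exact absurd (List.eq_of_mem_replicate h2) (by omega)
  · have hc : ∀ z ∈ f, z = M := by
      intro z hz
      rcases hf z hz with rfl | rfl
      · exact absurd hz hm
      · rfl
    rw [red_const hc] at h
    have h2 : (2 : ℕ) ∈ List.replicate f.length 1 := h ▸ U_two_mem hb
    exact absurd (List.eq_of_mem_replicate h2) (by omega)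

lemma red_map_sub (ha : 1 ≤ a) (hb : 1 ≤ b) (hv : ∀ x ∈ v, x = 1 ∨ x = 2)
    {m M : ℕ} (hmM : m < M) :
    red ((U a b v).map (fun z => if z = 1 then m else M)) = red (U a b v) := by
  set f := (U a b v).map (fun z => if z = 1 then m else M) with hfdef
  have hf : ∀ z ∈ f, z = m ∨ z = M := by
    intro z hz
    rw [hfdef, List.mem_map] at hz
    obtain ⟨x, hx, rfl⟩ := hz
    rcases U_mem hv x hx with rfl | rfl <;> simp [hmM.ne']
  have hmf : m ∈ f := by
    rw [hfdef, List.mem_map]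
    exact ⟨1, U_one_mem, by simp⟩
  have hMf : M ∈ f := by
    rw [hfdef, List.mem_map]
    exact ⟨2, U_two_mem hb, by simp⟩
  rw [red_two hmM hf hmf hMf, red_U ha hb hv, hfdef, List.map_map]
  nth_rewrite 2 [← List.map_id (U a b v)]
  apply List.map_congr_left
  intro z hz
  rcases U_mem hv z hz with rfl | rfl <;> simp [Function.comp, hmM.ne, hmM.ne']

section Prefix

variable {m M t s : ℕ} {W : List ℕ}

/-- The prefix word `M^t m^s M^(b+1)`. -/
def PW (b m M t s : ℕ) (W : List ℕ) : List ℕ :=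
  (List.replicate t M ++ (List.replicate s m ++ List.replicate (b+1) M)) ++ W

lemma PW_mem (hW : ∀ z ∈ W, z = m ∨ z = M) : ∀ z ∈ PW b m M t s W, z = m ∨ z = M := by
  intro z hz
  simp only [PW, List.mem_append, List.mem_replicate] at hz
  rcases hz with ((⟨_, rfl⟩ | ⟨_, rfl⟩ | ⟨_, rfl⟩)) | hz
  · exact Or.inr rfl
  · exact Or.inl rfl
  · exact Or.inr rfl
  · exact hW z hz

lemma PW_length : (PW b m M t s W).length = t + s + (b+1) + W.length := by
  simp [PW]; omega

lemma PW_get1 {q : ℕ} (hq : q < t) : (PW b m M t s W)[q]? = some M := by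
  rw [PW, List.getElem?_append_left (by simp; omega),
    List.getElem?_append_left (by simp; omega)]
  simp [hq]

lemma PW_get2 {q : ℕ} (hq1 : t ≤ q) (hq2 : q < t + s) : (PW b m M t s W)[q]? = some m := by
  rw [PW, List.getElem?_append_left (by simp; omega),
    List.getElem?_append_right (by simp; omega)]
  rw [List.getElem?_append_left (by simp; omega), List.getElem?_replicate, if_pos (by simp only [List.length_replicate]; omega)]

lemma PW_get3 {q : ℕ} (hq1 : t + s ≤ q) (hq2 : q < t + s + (b+1)) :
    (PW b m M t s W)[q]? = some M := by
  rw [PW, List.getElem?_append_left (by simp; omega),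
    List.getElem?_append_right (by simp; omega)]
  rw [List.getElem?_append_right (by simp; omega), List.getElem?_replicate, if_pos (by simp only [List.length_replicate]; omega)]

lemma no_prefix_match (ha : 1 ≤ a) (hb : 1 ≤ b) (hv : ∀ x ∈ v, x = 1 ∨ x = 2)
    (hmM : m < M) (hW : ∀ z ∈ W, z = m ∨ z = M) {p : ℕ}
    (hp : p < t + s + (b+1))
    (hred : red (((PW b m M t s W).drop p).take (U a b v).length) = red (U a b v)) :
    False := by
  set word := PW b m M t s W with hword
  set k := (U a b v).length with hk
  set f := (word.drop p).take k with hfdef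
  have hfsub : ∀ z ∈ f, z = m ∨ z = M := by
    intro z hz
    exact PW_mem hW z (List.mem_of_mem_drop (List.mem_of_mem_take hz))
  have hfeq : f = (U a b v).map (fun z => if z = 1 then m else M) :=
    red_eq_red_U ha hb hv hmM hfsub hred
  have h_at : ∀ q, q < k → word[p + q]? = ((U a b v)[q]?).map (fun z => if z = 1 then m else M) := by
    intro q hq
    have h1 : f[q]? = word[p + q]? := by
      rw [hfdef, List.getElem?_take_of_lt hq, List.getElem?_drop]
    rw [← h1, hfeq, List.getElem?_map]
  have hak : a < k := by rw [hk, U_length]; omega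
  have habk : a + b < k := by rw [hk, U_length]; omega
  have h0k : 0 < k := by omega
  rcases Nat.lt_or_ge p t with hpt | hpt
  · -- p in leading M-block
    have h1 := h_at 0 h0k
    rw [Nat.add_zero, PW_get1 hpt, U_get1 (by omega : 0 < a)] at h1
    simp at h1; omega
  rcases Nat.lt_or_ge p (t + s) with hpts | hpts
  · -- p in m-block
    rcases Nat.lt_trichotomy (p + a) (t + s) with hc | hc | hc
    · have h1 := h_at a hak
      have hU2 : (U a b v)[a]? = some 2 := by
        simpa using U_get2 (v := v) (a := a) (q := 0) (by omega)
      rw [PW_get2 (by omega) hc, hU2] at h1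
      simp at h1; omega
    · have h1 := h_at (a + b) habk
      rw [← Nat.add_assoc, PW_get3 (by omega) (by omega), U_get3] at h1
      simp at h1; omega
    · have h1 := h_at (t + s - p) (by omega)
      have he : p + (t + s - p) = t + s := by omega
      rw [he, PW_get3 (by omega) (by omega), U_get1 (by omega : t + s - p < a)] at h1
      simp at h1; omega
  · -- p in trailing M-block
    have h1 := h_at 0 h0k
    rw [Nat.add_zero, PW_get3 hpts hp, U_get1 (by omega : 0 < a)] at h1
    simp at h1; omega

end Prefix

lemma match_iff {a b : ℕ} {v : List ℕ} (ha : 1 ≤ a) (hb : 1 ≤ b)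
    (hv : ∀ x ∈ v, x = 1 ∨ x = 2) {m M t s : ℕ} {W : List ℕ}
    (hmM : m < M) (hW : ∀ z ∈ W, z = m ∨ z = M) :
    HasMatch (U a b v) (PW b m M t s W) ↔ HasMatch (U a b v) W := by
  have hPlen : (List.replicate t M ++ (List.replicate s m ++ List.replicate (b+1) M)).length
      = t + s + (b+1) := by simp; omega
  constructor
  · rintro ⟨p, hlen, hred⟩
    rcases Nat.lt_or_ge p (t + s + (b+1)) with hp | hp
    · exact absurd hred (fun h => no_prefix_match ha hb hv hmM hW hp h)
    · refine ⟨p - (t + s + (b+1)), ?_, ?_⟩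
      · rw [PW_length] at hlen; omega
      · have hdrop : (PW b m M t s W).drop p = W.drop (p - (t + s + (b+1))) := by
          rw [PW, show p = (t + s + (b+1)) + (p - (t + s + (b+1))) by omega,
            ← List.drop_drop, List.drop_left' hPlen]
          congr 1
          omega
        rw [← hdrop]; exact hred
  · rintro ⟨p, hlen, hred⟩
    refine ⟨(t + s + (b+1)) + p, ?_, ?_⟩
    · rw [PW_length]; omega
    · rw [PW, ← List.drop_drop, List.drop_left' hPlen]
      exact hred

lemma filter_flatten_replicate (c : ℕ) (q : ℕ → Bool) (l : List ℕ) :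
    ((l.map (fun x => List.replicate c x)).flatten).filter q
      = ((l.filter q).map (fun x => List.replicate c x)).flatten := by
  induction l with
  | nil => simp
  | cons hd tl ih =>
    simp only [List.map_cons, List.flatten_cons, List.filter_append, ih, List.filter_cons]
    by_cases hq : q hd <;> simp [hq, List.filter_replicate]

lemma filter_range'_one {n x y : ℕ} (hx1 : 1 ≤ x) (hxn : x ≤ n) (hy : n < y) :
    (List.range' 1 n).filter (fun z => decide (z = x ∨ z = y)) = [x] := by
  induction n with
  | zero => omega
  | succ n ih =>
    rw [List.range'_1_concat, List.filter_append]
    rcases Nat.lt_or_ge n x with hc | hc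
    · have hx : x = 1 + n := by omega
      have h1 : (List.range' 1 n).filter (fun z => decide (z = x ∨ z = y)) = [] := by
        rw [List.filter_eq_nil_iff]
        intro z hz
        rw [List.mem_range'_1] at hz
        simp; omega
      rw [h1]
      have hor : (1 + n = x ∨ 1 + n = y) := Or.inl (by omega)
      simp [List.filter_cons, hor, hx]
    · rw [ih (by omega) (by omega)]
      have h2 : (List.filter (fun z => decide (z = x ∨ z = y)) [1 + n]) = [] := by
        simp [List.filter_cons]; omega
      rw [h2, List.append_nil]

lemma filter_range'_two {n x y : ℕ} (hx1 : 1 ≤ x) (hxy : x < y) (hyn : y ≤ n) :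
    (List.range' 1 n).filter (fun z => decide (z = x ∨ z = y)) = [x, y] := by
  induction n with
  | zero => omega
  | succ n ih =>
    rw [List.range'_1_concat, List.filter_append]
    rcases Nat.lt_or_ge n y with hc | hc
    · have hy : y = 1 + n := by omega
      rw [filter_range'_one hx1 (by omega) (by omega)]
      have hor : (1 + n = x ∨ 1 + n = y) := Or.inr (by omega)
      simp [List.filter_cons, hor, hy]
    · rw [ih (by omega)]
      have h2 : (List.filter (fun z => decide (z = x ∨ z = y)) [1 + n]) = [] := by
        simp [List.filter_cons]; omega
      rw [h2, List.append_nil]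

lemma pre_filter_shape {a b : ℕ} {v : List ℕ} (hv : ∀ x ∈ v, x = 1 ∨ x = 2)
    {i j x y : ℕ} (hij : i < j) (hxy : x < y) (hne : ¬(x = i ∧ y = j)) :
    ∃ t0 s0, ((U a b v).map (fun z => if z = 1 then i else j)).filter
        (fun z => decide (z = x ∨ z = y))
      = List.replicate t0 y ++ List.replicate s0 x := by
  rw [List.filter_map]
  by_cases hic : (i = x ∨ i = y) <;> by_cases hjc : (j = x ∨ j = y)
  · exfalso
    rcases hic with rfl | rfl <;> rcases hjc with rfl | rfl
    · omega
    · exact hne ⟨rfl, rfl⟩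
    · omega
    · omega
  · -- i ∈ {x,y}, j ∉ {x,y} : filter keeps the 1's
    have hcong : ∀ z ∈ U a b v,
        ((fun z => decide (z = x ∨ z = y)) ∘ (fun z => if z = 1 then i else j)) z
          = decide (z = 1) := by
      intro z hz
      obtain ⟨hj1, hj2⟩ := not_or.mp hjc
      rcases U_mem hv z hz with rfl | rfl <;> simp [hic, hj1, hj2]
    rw [List.filter_congr hcong]
    set l := (U a b v).filter (fun z => decide (z = 1)) with hl
    have hlm : ∀ z ∈ l, z = 1 := by
      intro z hz
      have := (List.mem_filter.mp hz).2
      simpa using this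
    have hmap : l.map (fun z => if z = 1 then i else j) = List.replicate l.length i := by
      rw [List.eq_replicate_iff]
      refine ⟨by simp, ?_⟩
      intro zz hzz
      rw [List.mem_map] at hzz
      obtain ⟨z, hz, rfl⟩ := hzz
      rw [hlm z hz]
      simp
    rcases hic with rfl | rfl
    · exact ⟨0, l.length, by simp [hmap]⟩
    · exact ⟨l.length, 0, by simp [hmap]⟩
  · -- j ∈ {x,y}, i ∉ {x,y} : filter keeps the 2's
    have hcong : ∀ z ∈ U a b v,
        ((fun z => decide (z = x ∨ z = y)) ∘ (fun z => if z = 1 then i else j)) z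
          = decide (z = 2) := by
      intro z hz
      obtain ⟨hi1, hi2⟩ := not_or.mp hic
      rcases U_mem hv z hz with rfl | rfl <;> simp [hjc, hi1, hi2]
    rw [List.filter_congr hcong]
    set l := (U a b v).filter (fun z => decide (z = 2)) with hl
    have hlm : ∀ z ∈ l, z = 2 := by
      intro z hz
      have := (List.mem_filter.mp hz).2
      simpa using this
    have hmap : l.map (fun z => if z = 1 then i else j) = List.replicate l.length j := by
      rw [List.eq_replicate_iff]
      refine ⟨by simp, ?_⟩
      intro zz hzz
      rw [List.mem_map] at hzz
      obtain ⟨z, hz, rfl⟩ := hzz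
      rw [hlm z hz]
      simp
    rcases hjc with rfl | rfl
    · exact ⟨0, l.length, by simp [hmap]⟩
    · exact ⟨l.length, 0, by simp [hmap]⟩
  · refine ⟨0, 0, ?_⟩
    have : ∀ z ∈ U a b v,
        ((fun z => decide (z = x ∨ z = y)) ∘ (fun z => if z = 1 then i else j)) z = false := by
      intro z hz
      obtain ⟨hj1, hj2⟩ := not_or.mp hjc
      obtain ⟨hi1, hi2⟩ := not_or.mp hic
      rcases U_mem hv z hz with rfl | rfl <;> simp [hi1, hi2, hj1, hj2]
    rw [List.filter_congr this]
    simp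

lemma key_lemma {a b n : ℕ} (ha : 1 ≤ a) (hb : 1 ≤ b) {v : List ℕ}
    (hv : ∀ x ∈ v, x = 1 ∨ x = 2)
    {E : ℕ → ℕ → Prop} {w : List ℕ}
    (hw2 : ∀ x ∈ Finset.Icc 1 n, ∀ y ∈ Finset.Icc 1 n, x ≠ y →
      (E x y ↔ ¬ HasMatch (U a b v) (w.filter (fun z => decide (z = x ∨ z = y)))))
    {i j : ℕ} (hij : i < j)
    {x y : ℕ} (hx : x ∈ Finset.Icc 1 n) (hy : y ∈ Finset.Icc 1 n) (hxy : x < y) :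
    ((E x y ∧ ¬((x = i ∧ y = j) ∨ (x = j ∧ y = i))) ↔
      ¬ HasMatch (U a b v)
        ((((U a b v).map (fun z => if z = 1 then i else j)) ++
            ((List.range' 1 n).map (fun x => List.replicate (b + 1) x)).flatten ++ w).filter
          (fun z => decide (z = x ∨ z = y)))) := by
  have hx1 : 1 ≤ x := (Finset.mem_Icc.mp hx).1
  have hyn : y ≤ n := (Finset.mem_Icc.mp hy).2
  have hfilters : (((U a b v).map (fun z => if z = 1 then i else j)) ++
        ((List.range' 1 n).map (fun x => List.replicate (b + 1) x)).flatten ++ w).filter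
          (fun z => decide (z = x ∨ z = y))
      = ((U a b v).map (fun z => if z = 1 then i else j)).filter (fun z => decide (z = x ∨ z = y))
        ++ ((((List.range' 1 n).map (fun x => List.replicate (b + 1) x)).flatten).filter
              (fun z => decide (z = x ∨ z = y))
            ++ w.filter (fun z => decide (z = x ∨ z = y))) := by
    rw [List.filter_append, List.filter_append, List.append_assoc]
  have hB : (((List.range' 1 n).map (fun x => List.replicate (b + 1) x)).flatten).filter
        (fun z => decide (z = x ∨ z = y))
      = List.replicate (b+1) x ++ List.replicate (b+1) y := by
    rw [filter_flatten_replicate, filter_range'_two hx1 hxy hyn]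
    simp
  have hWmem : ∀ z ∈ w.filter (fun z => decide (z = x ∨ z = y)), z = x ∨ z = y := by
    intro z hz
    have := (List.mem_filter.mp hz).2
    simpa using this
  by_cases hcase : x = i ∧ y = j
  · obtain ⟨rfl, rfl⟩ := hcase
    have hpre : ((U a b v).map (fun z => if z = 1 then x else y)).filter
          (fun z => decide (z = x ∨ z = y))
        = (U a b v).map (fun z => if z = 1 then x else y) := by
      apply List.filter_eq_self.mpr
      intro z hz
      obtain ⟨zz, hzz, rfl⟩ := List.mem_map.mp hz
      rcases U_mem hv zz hzz with rfl | rfl <;> simp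
    have hmatch : HasMatch (U a b v)
        ((((U a b v).map (fun z => if z = 1 then x else y)) ++
            ((List.range' 1 n).map (fun x => List.replicate (b + 1) x)).flatten ++ w).filter
          (fun z => decide (z = x ∨ z = y))) := by
      refine ⟨0, ?_, ?_⟩
      · rw [hfilters, hpre]
        simp only [List.length_append, List.length_map, Nat.zero_add]
        omega
      · rw [List.drop_zero, hfilters, hpre, List.take_left' (by simp)]
        exact red_map_sub ha hb hv hxy
    constructor
    · rintro ⟨hE, hd⟩
      exact absurd (Or.inl ⟨rfl, rfl⟩) hd
    · intro hnm
      exact absurd hmatch hnm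
  · have hnd : ¬((x = i ∧ y = j) ∨ (x = j ∧ y = i)) := by
      rintro (⟨rfl, rfl⟩ | ⟨rfl, rfl⟩)
      · exact hcase ⟨rfl, rfl⟩
      · omega
    obtain ⟨t0, s0, hpre⟩ := pre_filter_shape hv hij hxy hcase
    have hkey : (((U a b v).map (fun z => if z = 1 then i else j)) ++
          ((List.range' 1 n).map (fun x => List.replicate (b + 1) x)).flatten ++ w).filter
            (fun z => decide (z = x ∨ z = y))
        = PW b x y t0 (s0 + (b+1)) (w.filter (fun z => decide (z = x ∨ z = y))) := by
      rw [hfilters, hpre, hB, PW]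
      simp [List.replicate_add, List.append_assoc]
    rw [hkey, match_iff ha hb hv hxy hWmem]
    exact (and_iff_left hnd).trans (hw2 x hx y hy (by omega))

/-- for `u = 1^a 2^b 1 v` (`a, b ≥ 1`, `v` over `{1,2}`), if `w`
`u`-represents `G = ([n], E)` and `ij ∈ E` with `i < j`, then
`u[i,j] 1^{b+1} 2^{b+1} ⋯ n^{b+1} w` `u`-represents `([n], E \ {ij})`. -/
theorem remove_edge_case_121 (a b n : ℕ) (ha : 1 ≤ a) (hb : 1 ≤ b)
    (v : List ℕ) (hv : ∀ x ∈ v, x = 1 ∨ x = 2)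
    (E : ℕ → ℕ → Prop) (hsym : Symmetric E) (hirr : ∀ x, ¬ E x x)
    (w : List ℕ)
    (hw : Represents (List.replicate a 1 ++ List.replicate b 2 ++ 1 :: v)
      w (Finset.Icc 1 n) E)
    (i j : ℕ) (hi : i ∈ Finset.Icc 1 n) (hj : j ∈ Finset.Icc 1 n) (hij : i < j)
    (he : E i j) :
    Represents (List.replicate a 1 ++ List.replicate b 2 ++ 1 :: v)
      (((List.replicate a 1 ++ List.replicate b 2 ++ 1 :: v).map
          (fun x => if x = 1 then i else j)) ++
        ((List.range' 1 n).map (fun x => List.replicate (b + 1) x)).flatten ++ w)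
      (Finset.Icc 1 n)
      (fun x y => E x y ∧ ¬ ((x = i ∧ y = j) ∨ (x = j ∧ y = i))) := by
  show Represents (U a b v)
      (((U a b v).map (fun x => if x = 1 then i else j)) ++
        ((List.range' 1 n).map (fun x => List.replicate (b + 1) x)).flatten ++ w)
      (Finset.Icc 1 n)
      (fun x y => E x y ∧ ¬ ((x = i ∧ y = j) ∨ (x = j ∧ y = i)))
  obtain ⟨hw1, hw2⟩ := hw
  constructor
  · intro z
    constructor
    · intro hz
      rcases List.mem_append.mp hz with hz | hz
      · rcases List.mem_append.mp hz with hz | hz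
        · obtain ⟨zz, hzz, rfl⟩ := List.mem_map.mp hz
          rcases U_mem hv zz hzz with rfl | rfl
          · simpa using hi
          · simpa using hj
        · obtain ⟨l, hl, hzl⟩ := List.mem_flatten.mp hz
          obtain ⟨t0, ht0, rfl⟩ := List.mem_map.mp hl
          obtain ⟨-, rfl⟩ := List.mem_replicate.mp hzl
          rw [List.mem_range'_1] at ht0
          rw [Finset.mem_Icc]
          omega
      · exact (hw1 z).mp hz
    · intro hz
      refine List.mem_append.mpr (Or.inl (List.mem_append.mpr (Or.inr ?_)))
      refine List.mem_flatten.mpr ⟨List.replicate (b+1) z, List.mem_map.mpr ⟨z, ?_, rfl⟩, ?_⟩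
      · rw [List.mem_range'_1]
        rw [Finset.mem_Icc] at hz
        omega
      · exact List.mem_replicate.mpr ⟨by omega, rfl⟩
  · intro x hx y hy hxy
    rcases Nat.lt_trichotomy x y with h | h | h
    · exact key_lemma ha hb hv hw2 hij hx hy h
    · exact absurd h hxy
    · have hfeq : (((U a b v).map (fun z => if z = 1 then i else j)) ++
            ((List.range' 1 n).map (fun x => List.replicate (b + 1) x)).flatten ++ w).filter
              (fun z => decide (z = x ∨ z = y))
          = (((U a b v).map (fun z => if z = 1 then i else j)) ++
            ((List.range' 1 n).map (fun x => List.replicate (b + 1) x)).flatten ++ w).filter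
              (fun z => decide (z = y ∨ z = x)) := by
        apply List.filter_congr
        intro z _
        simp [or_comm]
      show (E x y ∧ ¬((x = i ∧ y = j) ∨ (x = j ∧ y = i))) ↔ _
      rw [show ((((U a b v).map (fun xx => if xx = 1 then i else j)) ++
            ((List.range' 1 n).map (fun xx => List.replicate (b + 1) xx)).flatten ++ w).filter
              (fun z => decide (z = x ∨ z = y)))
          = (((U a b v).map (fun z => if z = 1 then i else j)) ++
            ((List.range' 1 n).map (fun xx => List.replicate (b + 1) xx)).flatten ++ w).filter
              (fun z => decide (z = y ∨ z = x)) from hfeq]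
      have h2 := key_lemma ha hb hv hw2 hij hy hx h
      constructor
      · rintro ⟨hE, hd⟩
        exact h2.mp ⟨hsym hE, fun c => hd (by tauto)⟩
      · intro hnm
        obtain ⟨hE, hd⟩ := h2.mpr hnm
        exact ⟨hsym hE, fun c => hd (by tauto)⟩
end

section
/- Let u = 1^a 2^b 1 v with a, b ≥ 1 and v a word over {1,2}. Then every graph G is u-representable: there exists a labeling G = ([n], E) and a word w with letters exactly [n] such that for all distinct x, y in [n], xy ∈ E if and only if w_{{x,y}} has no u-match. -/
lemma hasMatch_of_infix {u f w : List ℕ} (hf : f <:+: w) (hlen : f.length = u.length)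
    (hred : red f = red u) : HasMatch u w := by
  obtain ⟨s, t, rfl⟩ := hf
  refine ⟨s.length, by simp [← hlen], ?_⟩
  rw [List.append_assoc, List.drop_left, ← hlen, List.take_left, hred]

lemma red_eq_map_of_forall_mem_pair {x y : ℕ} (hxy : x < y) {f : List ℕ}
    (hf : ∀ c ∈ f, c = x ∨ c = y) (hx : x ∈ f) (hy : y ∈ f) :
    red f = f.map (fun c => if c = x then 1 else 2) := by
  have hletters : f.toFinset = {x, y} := by
    ext c
    simp only [List.mem_toFinset, Finset.mem_insert, Finset.mem_singleton]
    exact ⟨hf c, by rintro (rfl | rfl) <;> assumption⟩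
  refine List.map_congr_left fun c hc => ?_
  rcases hf c hc with rfl | rfl <;>
    simp [hletters, Finset.filter_insert, Finset.filter_singleton, hxy, hxy.ne', hxy.not_gt]

lemma exists_lt_of_two_mem_red {f : List ℕ} (h : 2 ∈ red f) : ∃ c ∈ f, ∃ d ∈ f, d < c := by
  obtain ⟨c, hc, hcard⟩ := List.mem_map.1 h
  obtain ⟨d, hd⟩ := Finset.card_pos.1 (by omega : 0 < (f.toFinset.filter (· < c)).card)
  rw [Finset.mem_filter, List.mem_toFinset] at hd
  exact ⟨c, hc, d, hd.1, hd.2⟩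

def pairSubst (x y c : ℕ) : ℕ := if c = 1 then x else y

section PairSubst

variable {x y : ℕ} {u : List ℕ}

lemma pairSubst_eq_or_eq (x y c : ℕ) : pairSubst x y c = x ∨ pairSubst x y c = y := by
  unfold pairSubst
  split <;> simp

lemma map_pairSubst_one_two (hu : ∀ c ∈ u, c = 1 ∨ c = 2) : u.map (pairSubst 1 2) = u := by
  refine List.map_congr_left (fun c hc => ?_) |>.trans u.map_id
  rcases hu c hc with rfl | rfl <;> rfl

lemma red_map_pairSubst (hxy : x < y) (hu : ∀ c ∈ u, c = 1 ∨ c = 2) (h1 : 1 ∈ u) (h2 : 2 ∈ u) :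
    red (u.map (pairSubst x y)) = u := by
  rw [red_eq_map_of_forall_mem_pair hxy, List.map_map]
  · refine List.map_congr_left (fun c hc => ?_) |>.trans u.map_id
    rcases hu c hc with rfl | rfl <;> simp [pairSubst, hxy.ne']
  · exact List.forall_mem_map.2 fun c _ => pairSubst_eq_or_eq x y c
  · exact List.mem_map.2 ⟨1, h1, rfl⟩
  · exact List.mem_map.2 ⟨2, h2, rfl⟩

lemma red_eq_self (hu : ∀ c ∈ u, c = 1 ∨ c = 2) (h1 : 1 ∈ u) (h2 : 2 ∈ u) : red u = u := by
  simpa [map_pairSubst_one_two hu] using red_map_pairSubst one_lt_two hu h1 h2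

lemma eq_map_pairSubst_of_red_eq (hxy : x < y) {f : List ℕ} (hf : ∀ c ∈ f, c = x ∨ c = y)
    (h2 : 2 ∈ u) (hred : red f = u) : f = u.map (pairSubst x y) := by
  obtain ⟨c, hc, d, hd, hdc⟩ := exists_lt_of_two_mem_red (hred ▸ h2)
  obtain ⟨hdx, hcy⟩ : d = x ∧ c = y := by
    rcases hf d hd with rfl | rfl <;> rcases hf c hc with rfl | rfl <;> omega
  rw [← hred, red_eq_map_of_forall_mem_pair hxy hf (hdx ▸ hd) (hcy ▸ hc), List.map_map]
  refine (List.map_congr_left (fun c hc => ?_) |>.trans f.map_id).symm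
  rcases hf c hc with rfl | rfl <;> simp [pairSubst, hxy.ne']

end PairSubst

def IsLongRun {α : Type*} (m : ℕ) (l : List α) : Prop := ∃ c, ∃ k ≥ m, l = List.replicate k c

section LongRuns

variable {α : Type*} {m : ℕ} {L : List (List α)}

lemma isLongRun_of_forall_eq {l : List α} {c : α} (h : ∀ d ∈ l, d = c) (hm : m ≤ l.length) :
    IsLongRun m l :=
  ⟨c, l.length, hm, List.eq_replicate_iff.2 ⟨rfl, h⟩⟩

lemma getElem?_flatten_eq_of_lt (hL : ∀ l ∈ L, l = [] ∨ IsLongRun m l) {s : ℕ} (hs : s < m)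
    {c z : α} (hc : L.flatten[0]? = some c) (hz : L.flatten[s]? = some z) : z = c := by
  induction L with
  | nil => simp at hc
  | cons l L ih =>
    have hL' : ∀ l ∈ L, l = [] ∨ IsLongRun m l := fun l hl => hL l (List.mem_cons_of_mem _ hl)
    rcases hL l List.mem_cons_self with rfl | ⟨d, k, hk, rfl⟩
    · exact ih hL' (by simpa using hc) (by simpa using hz)
    · simp only [List.flatten_cons, List.getElem?_append, List.length_replicate,
        List.getElem?_replicate] at hc hz
      rw [if_pos (by omega), if_pos (by omega)] at hc hz
      simp_all

lemma getElem?_flatten_eq_of_ne (hL : ∀ l ∈ L, l = [] ∨ IsLongRun m l) {j t : ℕ} (ht : t < m)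
    {x y z : α} (hne : x ≠ y) (hx : L.flatten[j]? = some x) (hy : L.flatten[j + 1]? = some y)
    (hz : L.flatten[j + 1 + t]? = some z) : z = y := by
  induction L generalizing j with
  | nil => simp at hx
  | cons l L ih =>
    have hL' : ∀ l ∈ L, l = [] ∨ IsLongRun m l := fun l hl => hL l (List.mem_cons_of_mem _ hl)
    rcases hL l List.mem_cons_self with rfl | ⟨d, k, hk, rfl⟩
    · exact ih hL' (by simpa using hx) (by simpa using hy) (by simpa using hz)
    simp only [List.flatten_cons, List.getElem?_append, List.length_replicate,
      List.getElem?_replicate] at hx hy hz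
    rcases lt_trichotomy (j + 1) k with hj | hj | hj
    · rw [if_pos (by omega), if_pos (by omega)] at hx hy
      simp_all
    · rw [if_neg (by omega)] at hy hz
      exact getElem?_flatten_eq_of_lt hL' ht (by simpa [hj] using hy)
        (by simpa [hj, Nat.add_sub_cancel_left] using hz)
    · rw [if_neg (by omega)] at hx hy hz
      refine ih hL' (j := j - k) hx ?_ ?_
      · rwa [show j - k + 1 = j + 1 - k by omega]
      · rwa [show j - k + 1 + t = j + 1 + t - k by omega]

end LongRuns

def AvoidedByLongRuns (u : List ℕ) : Prop :=
  ∀ x y : ℕ, x < y → ∀ L : List (List ℕ), (∀ l ∈ L, l = [] ∨ IsLongRun u.length l) →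
    (∀ c ∈ L.flatten, c = x ∨ c = y) → ¬ HasMatch u L.flatten

def pattern121 (a b : ℕ) (v : List ℕ) : List ℕ :=
  List.replicate a 1 ++ List.replicate b 2 ++ 1 :: v

section Pattern121

variable {a b : ℕ} {v : List ℕ}

lemma pattern121_letters (hv : ∀ c ∈ v, c = 1 ∨ c = 2) :
    ∀ c ∈ pattern121 a b v, c = 1 ∨ c = 2 := by
  intro c hc
  simp only [pattern121, List.mem_append, List.mem_cons, List.mem_replicate] at hc
  rcases hc with (⟨-, rfl⟩ | ⟨-, rfl⟩) | rfl | hc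
  exacts [.inl rfl, .inr rfl, .inl rfl, hv c hc]

lemma one_mem_pattern121 : 1 ∈ pattern121 a b v := by simp [pattern121]

lemma two_mem_pattern121 (hb : 1 ≤ b) : 2 ∈ pattern121 a b v := by
  simp [pattern121]; omega

lemma length_pattern121 : (pattern121 a b v).length = a + b + 1 + v.length := by
  simp [pattern121]; omega

lemma getElem?_pattern121_pred (ha : 1 ≤ a) : (pattern121 a b v)[a - 1]? = some 1 := by
  rw [pattern121, List.append_assoc, List.getElem?_append_left (by simp; omega),
    List.getElem?_replicate_of_lt (by omega)]

lemma getElem?_pattern121_self (hb : 1 ≤ b) : (pattern121 a b v)[a]? = some 2 := by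
  rw [pattern121, List.append_assoc, List.getElem?_append_right (by simp), List.length_replicate,
    Nat.sub_self, List.getElem?_append_left (by simp; omega), List.getElem?_replicate_of_lt hb]

lemma getElem?_pattern121_add : (pattern121 a b v)[a + b]? = some 1 := by
  simp [pattern121]

/-- The factor `x y^b x` of a `u`-match would need a run of `y` of length `b < |u|`. -/
theorem avoidedByLongRuns_pattern121 (ha : 1 ≤ a) (hb : 1 ≤ b) (hv : ∀ c ∈ v, c = 1 ∨ c = 2) :
    AvoidedByLongRuns (pattern121 a b v) := by
  set u := pattern121 a b v
  rintro x y hxy L hL hW ⟨i, -, hred⟩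
  have hfactor : (L.flatten.drop i).take u.length = u.map (pairSubst x y) :=
    eq_map_pairSubst_of_red_eq hxy
      (fun c hc => hW c (List.drop_subset _ _ (List.take_subset _ _ hc))) (two_mem_pattern121 hb)
      (hred.trans (red_eq_self (pattern121_letters hv) one_mem_pattern121 (two_mem_pattern121 hb)))
  have hletter : ∀ j < u.length, L.flatten[i + j]? = (u[j]?).map (pairSubst x y) := by
    intro j hj
    rw [← List.getElem?_map, ← hfactor, List.getElem?_take_of_lt hj, List.getElem?_drop]
  have hlen : u.length = a + b + 1 + v.length := length_pattern121
  have hx : L.flatten[i + (a - 1)]? = some x := by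
    simp [hletter (a - 1) (by omega), show u[a - 1]? = some 1 from getElem?_pattern121_pred ha,
      pairSubst]
  have hy : L.flatten[i + (a - 1) + 1]? = some y := by
    rw [show i + (a - 1) + 1 = i + a by omega]
    simp [hletter a (by omega), show u[a]? = some 2 from getElem?_pattern121_self hb, pairSubst]
  have hx' : L.flatten[i + (a - 1) + 1 + b]? = some x := by
    rw [show i + (a - 1) + 1 + b = i + (a + b) by omega]
    simp [hletter (a + b) (by omega), show u[a + b]? = some 1 from getElem?_pattern121_add,
      pairSubst]
  exact hxy.ne (getElem?_flatten_eq_of_ne hL (by omega) hxy.ne hx hy hx')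

end Pattern121

/-- The padding makes the restriction of `gadget u p q` to any pair other than `{p, q}` a run of
length at least `|u|`, or empty. -/
def gadget (u : List ℕ) (p q : ℕ) : List ℕ :=
  List.replicate u.length p ++ u.map (pairSubst p q) ++ List.replicate u.length q

def gadgetWord (u : List ℕ) (M : List (ℕ × ℕ)) : List ℕ :=
  (M.map fun pq => gadget u pq.1 pq.2).flatten

section Gadget

variable {u : List ℕ} {p q x y c : ℕ}

lemma eq_or_eq_of_mem_gadget (hc : c ∈ gadget u p q) : c = p ∨ c = q := by
  simp only [gadget, List.mem_append, List.mem_replicate, List.mem_map] at hc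
  rcases hc with (⟨-, rfl⟩ | ⟨d, -, rfl⟩) | ⟨-, rfl⟩
  exacts [.inl rfl, pairSubst_eq_or_eq p q d, .inr rfl]

lemma mem_gadget_iff (hu : u ≠ []) : c ∈ gadget u p q ↔ c = p ∨ c = q := by
  refine ⟨eq_or_eq_of_mem_gadget, ?_⟩
  rintro (rfl | rfl) <;> simp [gadget, hu]

lemma filter_gadget_eq_nil_or_isLongRun (hpq : p ≤ q) (hxy : x < y) (hne : ¬(p = x ∧ q = y)) :
    (gadget u p q).filter (fun z => z = x ∨ z = y) = [] ∨
      IsLongRun u.length ((gadget u p q).filter (fun z => z = x ∨ z = y)) := by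
  have hsurvivor : ∀ d ∈ (gadget u p q).filter (fun z => z = x ∨ z = y), d = p ∨ d = q := by
    intro d hd
    exact eq_or_eq_of_mem_gadget (List.mem_filter.1 hd).1
  by_cases hp : p = x ∨ p = y
  · refine .inr (isLongRun_of_forall_eq (c := p) (fun d hd => ?_) ?_)
    · have := hsurvivor d hd
      simp only [List.mem_filter, decide_eq_true_eq] at hd
      omega
    · simp [gadget, List.filter_append, List.filter_replicate, hp]
  by_cases hq : q = x ∨ q = y
  · refine .inr (isLongRun_of_forall_eq (c := q) (fun d hd => ?_) ?_)
    · have := hsurvivor d hd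
      simp only [List.mem_filter, decide_eq_true_eq] at hd
      omega
    · simp [gadget, List.filter_append, List.filter_replicate, hq]
      omega
  refine .inl (List.filter_eq_nil_iff.2 fun d hd => ?_)
  rw [decide_eq_true_eq]
  rcases eq_or_eq_of_mem_gadget hd with rfl | rfl <;> assumption

variable {M : List (ℕ × ℕ)}

lemma mem_gadgetWord_iff (hu : u ≠ []) : c ∈ gadgetWord u M ↔ ∃ pq ∈ M, c = pq.1 ∨ c = pq.2 := by
  simp [gadgetWord, mem_gadget_iff hu]

lemma hasMatch_filter_gadgetWord_iff (hu : ∀ c ∈ u, c = 1 ∨ c = 2) (h1 : 1 ∈ u) (h2 : 2 ∈ u)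
    (havoid : AvoidedByLongRuns u) (hM : ∀ pq ∈ M, pq.1 ≤ pq.2) (hxy : x < y) :
    HasMatch u ((gadgetWord u M).filter (fun z => z = x ∨ z = y)) ↔ (x, y) ∈ M := by
  constructor
  · intro hmatch
    by_contra hxyM
    rw [gadgetWord, List.filter_flatten, List.map_map] at hmatch
    refine havoid x y hxy _ ?_ ?_ hmatch
    · simp only [List.mem_map, Function.comp_apply]
      rintro l ⟨⟨p, q⟩, hpq, rfl⟩
      exact filter_gadget_eq_nil_or_isLongRun (hM _ hpq) hxy
        (by rintro ⟨rfl, rfl⟩; exact hxyM hpq)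
    · intro c hc
      rw [← List.map_map, ← List.filter_flatten, List.mem_filter, decide_eq_true_eq] at hc
      exact hc.2
  · intro hxyM
    have hinfix : u.map (pairSubst x y) <:+: gadget u x y := ⟨_, _, rfl⟩
    refine hasMatch_of_infix (f := u.map (pairSubst x y)) ?_ (List.length_map _) ?_
    · have hfilter : (u.map (pairSubst x y)).filter (fun z => z = x ∨ z = y) =
          u.map (pairSubst x y) := by
        simpa using fun c _ => pairSubst_eq_or_eq x y c
      exact hfilter ▸
        (hinfix.trans (List.infix_of_mem_flatten (List.mem_map.2 ⟨_, hxyM, rfl⟩))).filter _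
    · rw [red_map_pairSubst hxy hu h1 h2, red_eq_self hu h1 h2]

end Gadget

lemma represents_of_forall_lt {u w : List ℕ} {V : Finset ℕ} {A : ℕ → ℕ → Prop}
    (hA : ∀ x y, A x y → A y x) (hw : ∀ x, x ∈ w ↔ x ∈ V)
    (hlt : ∀ x ∈ V, ∀ y ∈ V, x < y →
      (A x y ↔ ¬ HasMatch u (w.filter (fun z => z = x ∨ z = y)))) :
    Represents u w V A := by
  refine ⟨hw, fun x hx y hy hne => ?_⟩
  rcases hne.lt_or_gt with hxy | hyx
  · exact hlt x hx y hy hxy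
  · have hswap : w.filter (fun z => z = x ∨ z = y) = w.filter (fun z => z = y ∨ z = x) :=
      List.filter_congr fun z _ => by simp only [or_comm]
    rw [hswap, show A x y ↔ A y x from ⟨hA x y, hA y x⟩]
    exact hlt y hy x hx hyx

/-- The word concatenates a gadget for every non-adjacent pair `p < q` and the run `p^{3|u|}` for
every vertex `p`, so that every vertex occurs. -/
theorem exists_represents_Icc {u : List ℕ} (hu : ∀ c ∈ u, c = 1 ∨ c = 2) (h1 : 1 ∈ u)
    (h2 : 2 ∈ u) (havoid : AvoidedByLongRuns u) (n : ℕ) {A : ℕ → ℕ → Prop}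
    (hA : ∀ x y, A x y → A y x) :
    ∃ w, Represents u w (Finset.Icc 1 n) A := by
  classical
  set M := ((Finset.Icc 1 n ×ˢ Finset.Icc 1 n).filter
    fun pq => pq.1 = pq.2 ∨ pq.1 < pq.2 ∧ ¬ A pq.1 pq.2).toList
  have hmemM : ∀ p q, (p, q) ∈ M ↔
      (p ∈ Finset.Icc 1 n ∧ q ∈ Finset.Icc 1 n) ∧ (p = q ∨ p < q ∧ ¬ A p q) := by
    simp [M]
  have hM : ∀ pq ∈ M, pq.1 ≤ pq.2 := by
    rintro ⟨p, q⟩ hpq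
    have := ((hmemM p q).1 hpq).2
    omega
  refine ⟨gadgetWord u M, represents_of_forall_lt hA (fun c => ?_) fun x hx y hy hxy => ?_⟩
  · rw [mem_gadgetWord_iff (List.ne_nil_of_mem h1)]
    constructor
    · rintro ⟨⟨p, q⟩, hpq, hc | hc⟩ <;> rw [hc]
      exacts [((hmemM p q).1 hpq).1.1, ((hmemM p q).1 hpq).1.2]
    · exact fun hc => ⟨(c, c), (hmemM c c).2 ⟨⟨hc, hc⟩, .inl rfl⟩, .inl rfl⟩
  · rw [hasMatch_filter_gadgetWord_iff hu h1 h2 havoid hM hxy, hmemM]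
    have := hxy.ne
    tauto

theorem every_graph_121_representable_general (a b : ℕ) (ha : 1 ≤ a) (hb : 1 ≤ b)
    (v : List ℕ) (hv : ∀ x ∈ v, x = 1 ∨ x = 2)
    (V : Type) [Fintype V] (G : SimpleGraph V) :
    ∃ (φ : V ≃ Fin (Fintype.card V)) (w : List ℕ),
      Represents (List.replicate a 1 ++ List.replicate b 2 ++ 1 :: v)
        w (Finset.Icc 1 (Fintype.card V))
        (fun x y => ∃ p q : V, G.Adj p q ∧ x = (φ p : ℕ) + 1 ∧ y = (φ q : ℕ) + 1) := by
  let φ := Fintype.equivFin V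
  obtain ⟨w, hw⟩ := exists_represents_Icc (pattern121_letters hv) one_mem_pattern121
    (two_mem_pattern121 hb) (avoidedByLongRuns_pattern121 ha hb hv) (Fintype.card V)
    (A := fun x y => ∃ p q : V, G.Adj p q ∧ x = (φ p : ℕ) + 1 ∧ y = (φ q : ℕ) + 1)
    fun x y ⟨p, q, hpq, hx, hy⟩ => ⟨q, p, hpq.symm, hy, hx⟩
  exact ⟨φ, w, hw⟩

/-- for `u = 1^a 2^b 1 v` with `a, b ≥ 1` and `v` over `{1,2}`, every
graph is `u`-representable: there exist a labeling of the vertices by `[n]` and a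
representing word. -/
theorem every_graph_121_representable (a b : ℕ) (ha : 1 ≤ a) (hb : 1 ≤ b)
    (v : List ℕ) (hv : ∀ x ∈ v, x = 1 ∨ x = 2)
    (V : Type) [Fintype V] [DecidableEq V] (G : SimpleGraph V) :
    ∃ (φ : V ≃ Fin (Fintype.card V)) (w : List ℕ),
      Represents (List.replicate a 1 ++ List.replicate b 2 ++ 1 :: v)
        w (Finset.Icc 1 (Fintype.card V))
        (fun x y => ∃ p q : V, G.Adj p q ∧ x = (φ p : ℕ) + 1 ∧ y = (φ q : ℕ) + 1) :=
  every_graph_121_representable_general a b ha hb v hv V G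
end

section
/- Let k ≥ 3 and u = 1^{k-1}2. Suppose the word w u-represents the labeled graph G = ([n], E), and let ij be an edge of G with i < j. Then the word w' = i^{k-2} (i+1)(i+2)...(j-1)(j+1)(j+2)...n i j (j+1)...n (i+1)(i+2)...n w u-represents the graph G' = ([n], E \ {ij}). -/
/-! For `x < y`, a `1^{k-1}2`-match in a word over `{x, y}` is a factor `x^{k-1} y`. Restricted to
any pair `{x, y} ≠ {i, j}`, the part of `w'` in front of `w` splits into blocks `q y` with
`|q| < k - 1`. A match meeting such a block cannot fit inside it, so it would repeat `y` and end on
a letter `> y` further right, while every later letter is `x` or `y`; hence `w'` and `w` restricted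
to `{x, y}` have the same matches. Restricted to `{i, j}`, the prefix is `i^{k-1} j j`, a match. -/

open List

theorem red_replicate_append_singleton {m a b : ℕ} (hm : m ≠ 0) (hab : a < b) :
    red (replicate m a ++ [b]) = replicate m 1 ++ [2] := by
  have hset : (replicate m a ++ [b]).toFinset = {a, b} := by
    ext c
    simp [mem_replicate, hm, or_comm]
  have ha : ({a, b} : Finset ℕ).filter (· < a) = ∅ := by
    ext c
    simp only [Finset.mem_filter, Finset.mem_insert, Finset.mem_singleton, Finset.notMem_empty,
      iff_false, not_and, not_lt]
    omega
  have hb : ({a, b} : Finset ℕ).filter (· < b) = {a} := by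
    ext c
    simp only [Finset.mem_filter, Finset.mem_insert, Finset.mem_singleton]
    omega
  simp [red, hset, ha, hb]

theorem exists_red_eq_map (t : List ℕ) :
    ∃ f : ℕ → ℕ, red t = t.map f ∧ Monotone f ∧ ∀ x ∈ t, ∀ y, x < y → f x < f y := by
  refine ⟨fun x => (t.toFinset.filter (· < x)).card + 1, rfl, fun x y hxy => ?_,
    fun x hx y hxy => ?_⟩
  · exact Nat.succ_le_succ (Finset.card_le_card
      (Finset.monotone_filter_right _ fun _ _ hc => lt_of_lt_of_le hc hxy))
  · refine Nat.succ_lt_succ (Finset.card_lt_card ⟨fun c hc => ?_, fun h => ?_⟩)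
    · simp only [Finset.mem_filter] at hc ⊢
      exact ⟨hc.1, hc.2.trans hxy⟩
    · simpa using h (Finset.mem_filter.2 ⟨mem_toFinset.2 hx, hxy⟩)

theorem eq_replicate_append_singleton_of_red_eq {m : ℕ} (hm : m ≠ 0) {t : List ℕ}
    (h : red t = replicate m 1 ++ [2]) : ∃ a b, a < b ∧ t = replicate m a ++ [b] := by
  obtain ⟨rank, hred, rank_mono, rank_lt⟩ := exists_red_eq_map t
  obtain ⟨run, last, ht, hrun, hlast⟩ := map_eq_append_iff.1 (hred ▸ h)
  obtain ⟨b, rfl, hb⟩ := map_eq_singleton_iff.1 hlast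
  obtain ⟨hlen, hrun⟩ := eq_replicate_iff.1 hrun
  simp only [length_map, mem_map, forall_exists_index, and_imp, forall_apply_eq_imp_iff₂]
    at hlen hrun
  obtain ⟨a, run', rfl⟩ := exists_cons_of_length_pos (by omega : 0 < run.length)
  have hmem {c} (hc : c ∈ a :: run') : c ∈ t := ht ▸ mem_append_left _ hc
  have hconst : ∀ c ∈ a :: run', c = a := by
    intro c hc
    have := hrun c hc
    have := hrun a mem_cons_self
    rcases lt_trichotomy c a with hca | rfl | hac
    · have := rank_lt c (hmem hc) a hca; omega
    · rfl
    · have := rank_lt a (hmem mem_cons_self) c hac; omega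
  refine ⟨a, b, ?_, by rw [ht, eq_replicate_iff.2 ⟨hlen, hconst⟩]⟩
  by_contra! hba
  have := rank_mono hba
  have := hrun a mem_cons_self
  omega

theorem hasMatch_iff {m : ℕ} (hm : m ≠ 0) {w : List ℕ} :
    HasMatch (replicate m 1 ++ [2]) w ↔ ∃ a b, a < b ∧ replicate m a ++ [b] <:+: w := by
  have hlen : (replicate m 1 ++ [2]).length = m + 1 := by simp
  rw [HasMatch, red_replicate_append_singleton hm one_lt_two, hlen]
  constructor
  · rintro ⟨i, -, hwin⟩
    obtain ⟨a, b, hab, hwin⟩ := eq_replicate_append_singleton_of_red_eq hm hwin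
    exact ⟨a, b, hab, hwin ▸ (take_prefix _ _).isInfix.trans (drop_suffix i w).isInfix⟩
  · rintro ⟨a, b, hab, s, e, rfl⟩
    refine ⟨s.length, by simp, ?_⟩
    rw [append_assoc, drop_left, take_left' (by simp)]
    exact red_replicate_append_singleton hm hab

theorem not_hasMatch_of_length_lt {u w : List ℕ} (h : w.length < u.length) :
    ¬ HasMatch u w :=
  fun ⟨_, hi, _⟩ => by omega

theorem hasMatch_append_iff {m y : ℕ} {p v : List ℕ} (hm : m ≠ 0)
    (hp : ¬ HasMatch (replicate m 1 ++ [2]) (p ++ [y])) (hv : ∀ c ∈ v, c ≤ y) :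
    HasMatch (replicate m 1 ++ [2]) (p ++ y :: v) ↔ HasMatch (replicate m 1 ++ [2]) v := by
  rw [hasMatch_iff hm] at hp ⊢
  rw [hasMatch_iff hm]
  refine ⟨?_, fun ⟨a, b, hab, h⟩ => ⟨a, b, hab, infix_append_of_infix_right (infix_cons h)⟩⟩
  rintro ⟨a, b, hab, h⟩
  rw [show p ++ y :: v = (p ++ [y]) ++ v by simp, infix_append_iff_ne_nil] at h
  rcases h with h | h | ⟨l₁, l₂, hl₁, hl₂, hsplit, hsuf, hpre⟩
  · exact absurd ⟨a, b, hab, h⟩ hp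
  · exact ⟨a, b, hab, h⟩
  · exfalso
    obtain ⟨l₁, rfl, -⟩ := (suffix_concat_iff.1 hsuf).resolve_left hl₁
    have hya : y = a := by
      have := congrArg dropLast hsplit
      rw [dropLast_concat, dropLast_append_of_ne_nil hl₂] at this
      exact eq_of_mem_replicate
        (this ▸ mem_append_left _ (mem_append_right _ (mem_singleton_self y)))
    have hbv : b ∈ v := by
      have := congrArg getLast? hsplit
      rw [getLast?_concat, getLast?_append_of_ne_nil _ hl₂] at this
      exact hpre.subset (mem_of_getLast? this.symm)
    have := hv b hbv
    omega

inductive ShortBlocks (m y : ℕ) : List ℕ → Prop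
  | nil : ShortBlocks m y []
  | block {q r : List ℕ} : q.length < m → ShortBlocks m y r → ShortBlocks m y (q ++ y :: r)

theorem ShortBlocks.cons_self {m y : ℕ} {r : List ℕ} (hm : 0 < m) (h : ShortBlocks m y r) :
    ShortBlocks m y (y :: r) :=
  .block (q := []) hm h

theorem ShortBlocks.cons_cons {m x y : ℕ} {r : List ℕ} (hm : 1 < m) (h : ShortBlocks m y r) :
    ShortBlocks m y (x :: y :: r) :=
  .block (q := [x]) hm h

theorem ShortBlocks.replicate_append {m l x y : ℕ} {r : List ℕ} (hl : l < m)
    (h : ShortBlocks m y r) : ShortBlocks m y (replicate l x ++ y :: r) :=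
  .block (by simpa using hl) h

theorem ShortBlocks.hasMatch_append_iff {m y : ℕ} {p v : List ℕ} (h : ShortBlocks m y p)
    (hle : ∀ c ∈ p ++ v, c ≤ y) :
    HasMatch (replicate m 1 ++ [2]) (p ++ v) ↔ HasMatch (replicate m 1 ++ [2]) v := by
  induction h with
  | nil => rfl
  | @block q r hq _ ih =>
    have hshort : ¬ HasMatch (replicate m 1 ++ [2]) (q ++ [y]) :=
      not_hasMatch_of_length_lt (by simpa using hq)
    rw [append_assoc, cons_append, _root_.hasMatch_append_iff (by omega) hshort
      fun c hc => hle c (by simp [hc])]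
    exact ih fun c hc => hle c (by simp_all)

theorem filter_range'_eq_or {x y : ℕ} (hxy : x < y) (a l : ℕ) :
    (range' a l).filter (fun z => z = x ∨ z = y) =
      (if a ≤ x ∧ x < a + l then [x] else []) ++ (if a ≤ y ∧ y < a + l then [y] else []) := by
  induction l generalizing a with
  | zero => simp
  | succ l ih =>
    rw [range'_succ, filter_cons, ih]
    split_ifs <;> simp_all <;> omega

def edgeRemovalPrefix (k n i j : ℕ) : List ℕ :=
  replicate (k - 2) i ++ range' (i + 1) (j - 1 - i) ++ range' (j + 1) (n - j) ++ [i, j] ++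
    range' (j + 1) (n - j) ++ range' (i + 1) (n - i)

theorem shortBlocks_filter_edgeRemovalPrefix {k n i j x y : ℕ} (hk : 3 ≤ k) (hij : i < j)
    (hxy : x < y) (hyn : y ≤ n) (hne : ¬ (x = i ∧ y = j)) :
    ShortBlocks (k - 1) y ((edgeRemovalPrefix k n i j).filter (fun z => z = x ∨ z = y)) := by
  simp only [edgeRemovalPrefix, filter_append, filter_replicate, filter_cons, filter_nil,
    filter_range'_eq_or hxy, decide_eq_true_eq]
  rcases lt_trichotomy x i with hxi | hxi | hxi <;>
    rcases lt_trichotomy y i with hyi | hyi | hyi <;>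
    rcases lt_trichotomy x j with hxj | hxj | hxj <;>
    rcases lt_trichotomy y j with hyj | hyj | hyj
  -- In the consistent cases the filtered prefix is `[]`, `y^{k-2} y`, `yy`, `yyy`, `x^{k-2} yxy`,
  -- `x^{k-2} yxyy`, `xyxy`, `xyyxy`, `yxyxy` or `xyxyxy`.
  all_goals try omega
  all_goals simp (disch := omega) only [if_pos, if_neg, nil_append, append_nil, cons_append,
    append_assoc]
  all_goals subst_vars
  all_goals repeat' first
    | exact .nil
    | apply ShortBlocks.cons_self
    | apply ShortBlocks.cons_cons
    | apply ShortBlocks.replicate_append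
  all_goals omega

theorem hasMatch_filter_edgeRemovalPrefix_append {k n i j : ℕ} (hk : 2 ≤ k) (hij : i < j)
    (hjn : j ≤ n) (w : List ℕ) :
    HasMatch (replicate (k - 1) 1 ++ [2])
      ((edgeRemovalPrefix k n i j ++ w).filter (fun z => z = i ∨ z = j)) := by
  have hpre : (edgeRemovalPrefix k n i j).filter (fun z => z = i ∨ z = j) =
      replicate (k - 1) i ++ [j, j] := by
    simp (disch := omega) only [edgeRemovalPrefix, filter_append, filter_replicate, filter_cons,
      filter_range'_eq_or hij, decide_eq_true_eq, true_or, or_true, if_true, if_pos, if_neg,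
      nil_append, append_nil, cons_append, append_assoc]
    rw [show k - 1 = k - 2 + 1 by omega, replicate_succ', append_assoc, singleton_append]
  rw [hasMatch_iff (by omega), filter_append, hpre]
  exact ⟨i, j, hij, [], j :: w.filter (fun z => z = i ∨ z = j), by simp⟩

theorem filter_eq_or_comm (x y : ℕ) (l : List ℕ) :
    l.filter (fun z => z = y ∨ z = x) = l.filter (fun z => z = x ∨ z = y) :=
  filter_congr fun _ _ => by simp only [or_comm]

theorem hasMatch_filter_edgeRemovalPrefix_append_iff {k n i j x y : ℕ} (hk : 3 ≤ k)
    (hij : i < j) (hxn : x ≤ n) (hyn : y ≤ n) (hxy : x ≠ y)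
    (hne : ¬ ((x = i ∧ y = j) ∨ (x = j ∧ y = i))) (w : List ℕ) :
    HasMatch (replicate (k - 1) 1 ++ [2])
        ((edgeRemovalPrefix k n i j ++ w).filter (fun z => z = x ∨ z = y)) ↔
      HasMatch (replicate (k - 1) 1 ++ [2]) (w.filter (fun z => z = x ∨ z = y)) := by
  wlog hlt : x < y generalizing x y
  · simp only [← filter_eq_or_comm x y]
    exact this hyn hxn hxy.symm (by tauto) (by omega)
  rw [filter_append]
  refine (shortBlocks_filter_edgeRemovalPrefix hk hij hlt hyn (by tauto)).hasMatch_append_iff ?_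
  intro c hc
  rw [← filter_append, mem_filter] at hc
  simp only [decide_eq_true_eq] at hc
  omega

theorem mem_edgeRemovalPrefix {k n i j c : ℕ} (hi : 1 ≤ i) (hjn : j ≤ n) (hij : i < j)
    (hc : c ∈ edgeRemovalPrefix k n i j) : c ∈ Finset.Icc 1 n := by
  simp only [edgeRemovalPrefix, mem_append, mem_replicate, mem_range'_1, mem_cons,
    not_mem_nil, or_false] at hc
  rw [Finset.mem_Icc]
  omega

theorem remove_edge_case_112_general (k n : ℕ) (hk : 3 ≤ k)
    (E : ℕ → ℕ → Prop)
    (w : List ℕ)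
    (hw : Represents (List.replicate (k - 1) 1 ++ [2]) w (Finset.Icc 1 n) E)
    (i j : ℕ) (hi : i ∈ Finset.Icc 1 n) (hj : j ∈ Finset.Icc 1 n) (hij : i < j) :
    Represents (List.replicate (k - 1) 1 ++ [2])
      (List.replicate (k - 2) i ++ List.range' (i + 1) (j - 1 - i) ++
        List.range' (j + 1) (n - j) ++ [i, j] ++ List.range' (j + 1) (n - j) ++
        List.range' (i + 1) (n - i) ++ w)
      (Finset.Icc 1 n)
      (fun x y => E x y ∧ ¬ ((x = i ∧ y = j) ∨ (x = j ∧ y = i))) := by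
  obtain ⟨hletters, hadj⟩ := hw
  rw [Finset.mem_Icc] at hi hj
  change Represents _ (edgeRemovalPrefix k n i j ++ w) _ _
  refine ⟨fun c => ?_, fun x hx y hy hxy => ?_⟩
  · rw [mem_append, hletters, or_iff_right_of_imp (mem_edgeRemovalPrefix hi.1 hj.2 hij)]
  by_cases hrem : (x = i ∧ y = j) ∨ (x = j ∧ y = i)
  · have hmatch := hasMatch_filter_edgeRemovalPrefix_append (by omega : 2 ≤ k) hij hj.2 w
    rcases hrem with ⟨rfl, rfl⟩ | ⟨rfl, rfl⟩
    · simpa using hmatch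
    · rw [← filter_eq_or_comm] at hmatch
      simpa using hmatch
  rw [hasMatch_filter_edgeRemovalPrefix_append_iff hk hij (Finset.mem_Icc.1 hx).2
    (Finset.mem_Icc.1 hy).2 hxy hrem, ← hadj x hx y hy hxy]
  simp [hrem]

/-- for `u = 1^{k-1} 2` (`k ≥ 3`), if `w` `u`-represents `G = ([n], E)`
and `ij ∈ E` with `i < j`, then
`i^{k-2} (i+1)⋯(j-1)(j+1)⋯n i j (j+1)⋯n (i+1)⋯n w` `u`-represents `([n], E \ {ij})`. -/
theorem remove_edge_case_112 (k n : ℕ) (hk : 3 ≤ k)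
    (E : ℕ → ℕ → Prop) (hsym : Symmetric E) (hirr : ∀ x, ¬ E x x)
    (w : List ℕ)
    (hw : Represents (List.replicate (k - 1) 1 ++ [2]) w (Finset.Icc 1 n) E)
    (i j : ℕ) (hi : i ∈ Finset.Icc 1 n) (hj : j ∈ Finset.Icc 1 n) (hij : i < j)
    (he : E i j) :
    Represents (List.replicate (k - 1) 1 ++ [2])
      (List.replicate (k - 2) i ++ List.range' (i + 1) (j - 1 - i) ++
        List.range' (j + 1) (n - j) ++ [i, j] ++ List.range' (j + 1) (n - j) ++
        List.range' (i + 1) (n - i) ++ w)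
      (Finset.Icc 1 n)
      (fun x y => E x y ∧ ¬ ((x = i ∧ y = j) ∨ (x = j ∧ y = i))) :=
  remove_edge_case_112_general k n hk E w hw i j hi hj hij
end

section
/- Let k ≥ 3 and u = 1^{k-1}2. Then every graph G is u-representable: there exists a labeling G = ([n], E) and a word w over [n] containing every letter of [n], such that for distinct x < y, xy ∈ E if and only if w_{{x,y}} contains no factor of the form x^{k-1} y (k-1 copies of x followed by one y). -/
namespace List

variable {α : Type*} {s : List α} {x : α}

theorem not_infix_append_cons (hx : x ∉ s) {l₁ l₂ : List α} (h₁ : ¬ s <:+: l₁)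
    (h₂ : ¬ s <:+: l₂) : ¬ s <:+: l₁ ++ x :: l₂ := by
  intro h
  rcases infix_append_iff.1 h with h | h | ⟨s₁, s₂, rfl, hs₁, hs₂⟩
  · exact h₁ h
  · rcases infix_cons_iff.1 h with h | h
    · cases s with
      | nil => exact h₁ nil_infix
      | cons y s => exact hx ((cons_prefix_cons.1 h).1 ▸ mem_cons_self)
    · exact h₂ h
  · cases s₂ with
    | nil => exact h₁ (by simpa using hs₁.isInfix)
    | cons y s₂ => exact hx (by simp [(cons_prefix_cons.1 hs₂).1])

theorem not_infix_append_flatMap {β : Type*} (hx : x ∉ s) {t₁ t₂ : List α}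
    (hS : x :: t₁ = t₂ ++ [x]) (hs : ¬ s <:+: x :: t₁) {M : β → List α} :
    ∀ {L : List β}, (∀ i ∈ L, ¬ s <:+: M i) →
      ¬ s <:+: (x :: t₁) ++ L.flatMap (fun i => M i ++ x :: t₁)
  | [], _ => by simpa using hs
  | i :: L, hM => by
    have ih := not_infix_append_flatMap hx hS hs (L := L) fun j hj => hM j (mem_cons_of_mem _ hj)
    have hsplit : (x :: t₁) ++ (i :: L).flatMap (fun i => M i ++ x :: t₁) =
        t₂ ++ x :: (M i ++ x :: (t₁ ++ L.flatMap (fun i => M i ++ x :: t₁))) := by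
      rw [show t₂ ++ x :: (M i ++ x :: (t₁ ++ L.flatMap (fun i => M i ++ x :: t₁))) =
        (t₂ ++ [x]) ++ (M i ++ x :: t₁ ++ L.flatMap (fun i => M i ++ x :: t₁)) by simp, ← hS]
      simp
    rw [hsplit]
    refine not_infix_append_cons hx (fun h => hs (h.trans ?_))
      (not_infix_append_cons hx (hM i mem_cons_self) (fun h => ih (h.trans ?_)))
    · rw [hS]; exact infix_append_left
    · exact (suffix_cons _ _).isInfix

theorem not_replicate_infix_of_le {a : α} {i j : ℕ} {l : List α} (hij : i ≤ j)
    (h : ¬ replicate i a <:+: l) : ¬ replicate j a <:+: l :=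
  fun hj => h ((infix_replicate_iff.2 ⟨by simpa using hij, by simp⟩).trans hj)

theorem not_replicate_infix_of_count_lt {a : α} [BEq α] [LawfulBEq α] {m : ℕ} {l : List α}
    (h : l.count a < m) : ¬ replicate m a <:+: l := fun hm => by
  simpa [count_replicate] using (hm.sublist.count_le a).trans_lt h

theorem not_pair_infix_flatten_replicate {a b : α} (hab : a ≠ b) :
    ∀ j, ¬ [a, a] <:+: (replicate j [a, b]).flatten
  | 0 => by simp
  | j + 1 => by
    rw [replicate_succ, flatten_cons, show [a, b] = [a] ++ [b] from rfl, append_assoc]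
    exact not_infix_append_cons (by simpa using hab.symm) (fun h => by simpa using h.length_le)
      (not_pair_infix_flatten_replicate hab j)

end List

theorem red_replicate_append_singleton_s10 {m d c : ℕ} (hm : m ≠ 0) (hdc : d < c) :
    red (List.replicate m d ++ [c]) = List.replicate m 1 ++ [2] := by
  have hset : (List.replicate m d ++ [c]).toFinset = {d, c} := by
    ext z; simp [List.mem_replicate, hm, or_comm]
  have hd : ({d, c} : Finset ℕ).filter (· < d) = ∅ := by ext z; simp; omega
  have hc : ({d, c} : Finset ℕ).filter (· < c) = {d} := by ext z; simp; omega
  simp [red, hset, hd, hc]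

theorem exists_eq_replicate_append_of_red_eq {m : ℕ} (hm : m ≠ 0) {f : List ℕ}
    (h : red f = List.replicate m 1 ++ [2]) :
    ∃ d c, d < c ∧ f = List.replicate m d ++ [c] := by
  have hlen : f.length = m + 1 := by simpa [red] using congrArg List.length h
  obtain ⟨f', c, rfl⟩ : ∃ f' c, f = f' ++ [c] :=
    (f.eq_nil_or_concat').resolve_left (by rintro rfl; simp at hlen)
  replace hlen : f'.length = m := by simpa using hlen
  set g : ℕ → ℕ := fun x => ((f' ++ [c]).toFinset.filter (· < x)).card + 1
  have hmin : ∀ z, g z = 1 → ∀ y ∈ f' ++ [c], ¬ y < z := fun z hz y hy => by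
    have hempty : (f' ++ [c]).toFinset.filter (· < z) = ∅ :=
      Finset.card_eq_zero.1 (by simp only [g] at hz; omega)
    exact Finset.filter_eq_empty_iff.1 hempty (List.mem_toFinset.2 hy)
  have h' : f'.map g ++ [g c] = List.replicate m 1 ++ [2] := by
    rw [← List.map_singleton, ← List.map_append]; exact h
  obtain ⟨hf', hc⟩ := List.append_inj h' (by simp [hlen])
  have hg1 : ∀ z ∈ f', g z = 1 := fun z hz =>
    List.eq_of_mem_replicate (hf' ▸ List.mem_map_of_mem hz)
  obtain ⟨d, hd⟩ := List.exists_mem_of_length_pos (show 0 < f'.length by omega)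
  have hconst : ∀ z ∈ f', z = d := fun z hz =>
    le_antisymm (not_lt.1 (hmin z (hg1 z hz) d (by simp [hd])))
      (not_lt.1 (hmin d (hg1 d hd) z (by simp [hz])))
  refine ⟨d, c, lt_of_le_of_ne (not_lt.1 (hmin d (hg1 d hd) c (by simp))) ?_, ?_⟩
  · rintro rfl
    simp [hg1 d hd] at hc
  · rw [List.eq_replicate_iff.2 ⟨hlen, hconst⟩]

theorem hasMatch_iff_exists_infix {u w : List ℕ} :
    HasMatch u w ↔ ∃ f, f.length = u.length ∧ red f = red u ∧ f <:+: w := by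
  constructor
  · rintro ⟨i, hi, hred⟩
    exact ⟨(w.drop i).take u.length, by simp; omega, hred,
      (List.take_prefix _ _).isInfix.trans (List.drop_suffix _ _).isInfix⟩
  · rintro ⟨f, hlen, hred, s, t, rfl⟩
    refine ⟨s.length, by simp [hlen], ?_⟩
    rw [List.append_assoc, List.drop_left, List.take_left' hlen, hred]

theorem hasMatch_replicate_append_iff {m : ℕ} (hm : m ≠ 0) {w : List ℕ} :
    HasMatch (List.replicate m 1 ++ [2]) w ↔ ∃ d c, d < c ∧ List.replicate m d ++ [c] <:+: w := by
  rw [hasMatch_iff_exists_infix, red_replicate_append_singleton_s10 hm one_lt_two]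
  constructor
  · rintro ⟨f, -, hred, hf⟩
    obtain ⟨d, c, hdc, rfl⟩ := exists_eq_replicate_append_of_red_eq hm hred
    exact ⟨d, c, hdc, hf⟩
  · rintro ⟨d, c, hdc, hf⟩
    exact ⟨_, by simp, red_replicate_append_singleton_s10 hm hdc, hf⟩

/-- The word `w_{a,b}` of the paper. -/
def restrictPair (a b : ℕ) (w : List ℕ) : List ℕ := w.filter (fun z => z = a ∨ z = b)

section restrictPair

variable {a b : ℕ}

theorem restrictPair_comm (w : List ℕ) : restrictPair a b w = restrictPair b a w := by
  simp only [restrictPair, or_comm]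

theorem mem_of_mem_restrictPair {w : List ℕ} {z : ℕ} (hz : z ∈ restrictPair a b w) :
    z = a ∨ z = b := by
  simpa using (List.mem_filter.1 hz).2

theorem hasMatch_restrictPair_iff {m : ℕ} (hm : m ≠ 0) (hab : a < b) {w : List ℕ} :
    HasMatch (List.replicate m 1 ++ [2]) (restrictPair a b w) ↔
      List.replicate m a ++ [b] <:+: restrictPair a b w := by
  rw [hasMatch_replicate_append_iff hm]
  refine ⟨fun ⟨d, c, hdc, h⟩ => ?_, fun h => ⟨a, b, hab, h⟩⟩
  have hd := mem_of_mem_restrictPair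
    (h.subset (List.mem_append_left _ (List.mem_replicate.2 ⟨hm, rfl⟩)))
  have hc := mem_of_mem_restrictPair
    (h.subset (List.mem_append_right _ (List.mem_singleton_self c)))
  obtain ⟨rfl, rfl⟩ : d = a ∧ c = b := by omega
  exact h

theorem restrictPair_range' (hab : a < b) :
    ∀ s len, restrictPair a b (List.range' s len) =
      (if a ∈ List.range' s len then [a] else []) ++ (if b ∈ List.range' s len then [b] else [])
  | s, 0 => by simp [restrictPair]
  | s, len + 1 => by
    have ih := restrictPair_range' hab (s + 1) len
    simp only [restrictPair, List.range'_succ, List.filter_cons, List.mem_cons,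
      List.mem_range'_1] at ih ⊢
    rw [ih]
    by_cases hsa : s = a
    · subst hsa; simp [hab.ne, hab.ne']
    · by_cases hsb : s = b
      · subst hsb; simp [hab.ne, hab.ne', hab.not_gt]
      · simp [hsa, hsb, Ne.symm hsa, Ne.symm hsb]

end restrictPair

def separatorAux (n : ℕ) : ℕ → List ℕ
  | 0 => []
  | t + 1 => List.range' (t + 1) (n - t) ++ separatorAux n t

/-- `[n] [n - 1, n] ⋯ [1, …, n]`, which restricted to any letters `a < b` reads `b^(b-a) (ab)^a`:
it begins and ends with `b` and never repeats `a`. -/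
def separator (n : ℕ) : List ℕ := separatorAux n n

theorem mem_separatorAux {n x : ℕ} :
    ∀ t, x ∈ separatorAux n t ↔ 0 < t ∧ 1 ≤ x ∧ x ≤ n
  | 0 => by simp [separatorAux]
  | t + 1 => by
    rw [separatorAux, List.mem_append, List.mem_range'_1, mem_separatorAux t]
    omega

theorem mem_separator {n x : ℕ} : x ∈ separator n ↔ 1 ≤ x ∧ x ≤ n := by
  rw [separator, mem_separatorAux]
  omega

section separator

variable {n a b : ℕ}

theorem restrictPair_separatorAux (hab : a < b) (hbn : b ≤ n) :
    ∀ t, restrictPair a b (separatorAux n t) =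
      List.replicate (min t b - min t a) b ++ (List.replicate (min t a) [a, b]).flatten
  | 0 => by simp [separatorAux, restrictPair]
  | t + 1 => by
    rw [separatorAux, restrictPair, List.filter_append, ← restrictPair, ← restrictPair,
      restrictPair_separatorAux hab hbn t, restrictPair_range' hab]
    simp only [List.mem_range'_1]
    obtain h | h | h : t < a ∨ (a ≤ t ∧ t < b) ∨ b ≤ t := by omega
    · rw [if_pos (by omega), if_pos (by omega), min_eq_left (by omega : t + 1 ≤ b),
        min_eq_left (by omega : t + 1 ≤ a), min_eq_left (by omega : t ≤ b),
        min_eq_left h.le, List.replicate_succ]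
      simp
    · rw [if_neg (by omega), if_pos (by omega), min_eq_left (by omega : t + 1 ≤ b),
        min_eq_right (by omega : a ≤ t + 1), min_eq_left h.2.le, min_eq_right h.1,
        show t + 1 - a = t - a + 1 by omega, List.replicate_succ]
      simp
    · rw [if_neg (by omega), if_neg (by omega), min_eq_right (by omega : b ≤ t + 1),
        min_eq_right (by omega : a ≤ t + 1), min_eq_right h, min_eq_right (by omega : a ≤ t)]
      simp

theorem restrictPair_separator (hab : a < b) (hbn : b ≤ n) :
    restrictPair a b (separator n) =
      List.replicate (b - a) b ++ (List.replicate a [a, b]).flatten := by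
  rw [separator, restrictPair_separatorAux hab hbn, min_eq_right hbn,
    min_eq_right (hab.le.trans hbn)]

theorem exists_restrictPair_separator_eq (ha : 1 ≤ a) (hab : a < b) (hbn : b ≤ n) :
    ∃ t₁ t₂, restrictPair a b (separator n) = b :: t₁ ∧ b :: t₁ = t₂ ++ [b] := by
  obtain ⟨i, hi⟩ : ∃ i, b - a = i + 1 := ⟨b - a - 1, by omega⟩
  obtain ⟨j, hj⟩ : ∃ j, a = j + 1 := ⟨a - 1, by omega⟩
  refine ⟨_, List.replicate (b - a) b ++ (List.replicate j [a, b]).flatten ++ [a],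
    by rw [restrictPair_separator hab hbn, hi, List.replicate_succ, List.cons_append], ?_⟩
  rw [← List.cons_append, ← List.replicate_succ, ← hi,
    show List.replicate a [a, b] = List.replicate (j + 1) [a, b] by rw [← hj],
    List.replicate_succ', List.flatten_append]
  simp

theorem not_pair_infix_restrictPair_separator (hab : a < b) (hbn : b ≤ n) :
    ¬ [a, a] <:+: restrictPair a b (separator n) := by
  obtain ⟨i, hi⟩ : ∃ i, b - a = i + 1 := ⟨b - a - 1, by omega⟩
  rw [restrictPair_separator hab hbn, hi, List.replicate_succ', List.append_assoc,
    List.singleton_append]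
  exact List.not_infix_append_cons (by simpa using hab.ne')
    (show ¬ List.replicate 2 a <:+: _ from
      List.not_replicate_infix_of_count_lt (by simp [List.count_replicate, hab.ne']))
    (List.not_pair_infix_flatten_replicate hab.ne a)

end separator

def otherLetters (n x y : ℕ) : List ℕ := (List.range' 1 n).filter (fun z => z ≠ x ∧ z ≠ y)

/-- Restricted to `x, y` this is `x^m y`; restricted to `x` and any other letter `b ≤ n`, the
copy of `b` in each `otherLetters n x y` separates the copies of `x`. -/
def block (m n x y : ℕ) : List ℕ :=
  (List.replicate (m - 1) (x :: otherLetters n x y)).flatten ++ [x, y]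

section block

variable {m n a b x y : ℕ}

theorem restrictPair_block :
    restrictPair a b (block m n x y) =
      (List.replicate (m - 1) (restrictPair a b (x :: otherLetters n x y))).flatten ++
        restrictPair a b [x, y] := by
  simp only [block, restrictPair, List.filter_append, List.filter_flatten, List.map_replicate]

theorem restrictPair_otherLetters_self : restrictPair a b (otherLetters n a b) = [] := by
  simp only [restrictPair, otherLetters, List.filter_filter, List.filter_eq_nil_iff]
  intro z _
  simp only [Bool.and_eq_true, decide_eq_true_eq]
  tauto

theorem restrictPair_otherLetters_of_ne (hb : b ∈ List.range' 1 n) (hab : a ≠ b)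
    (hyb : y ≠ b) :
    restrictPair a b (otherLetters n a y) = [b] := by
  rw [restrictPair, otherLetters, List.filter_filter,
    List.filter_congr (q := fun z => z = b) fun z _ => by
      by_cases hz : z = b <;> simp [hz, hab.symm, hyb.symm]; tauto,
    List.filter_eq, List.count_eq_one_of_mem List.nodup_range' hb, List.replicate_one]

theorem restrictPair_block_self (hm : m ≠ 0) :
    restrictPair a b (block m n a b) = List.replicate m a ++ [b] := by
  rw [restrictPair_block, restrictPair, List.filter_cons_of_pos (by simp), ← restrictPair,
    restrictPair_otherLetters_self, List.flatten_replicate_singleton]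
  obtain ⟨m, rfl⟩ : ∃ m', m = m' + 1 := ⟨m - 1, by omega⟩
  simp [restrictPair, List.replicate_succ']

theorem not_pair_infix_restrictPair_block (hm : m ≠ 0) (hb : b ∈ List.range' 1 n) (hab : a ≠ b)
    (hya : y ≠ a) (hyb : y ≠ b) : ¬ [a, a] <:+: restrictPair a b (block m n a y) := by
  rw [restrictPair_block, restrictPair, List.filter_cons_of_pos (by simp), ← restrictPair,
    restrictPair_otherLetters_of_ne hb hab hyb]
  have hay : restrictPair a b [a, y] = [a] := by simp [restrictPair, hya, hyb]
  rw [hay]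
  refine fun h => List.not_pair_infix_flatten_replicate hab m (h.trans (List.IsPrefix.isInfix ?_))
  obtain ⟨m, rfl⟩ : ∃ m', m = m' + 1 := ⟨m - 1, by omega⟩
  exact ⟨[b], by simp [List.replicate_succ']⟩

theorem count_block_lt (hm : 2 ≤ m) (hxa : x ≠ a) : (block m n x y).count a < m := by
  have hcount : (otherLetters n x y).count a ≤ 1 :=
    List.nodup_iff_count_le_one.1 (List.Nodup.filter _ List.nodup_range') a
  rw [block, List.count_append, List.count_flatten, List.map_replicate, List.sum_replicate,
    smul_eq_mul, List.count_cons_of_ne hxa]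
  by_cases hya : y = a
  · subst hya
    have : (otherLetters n x y).count y = 0 :=
      List.count_eq_zero.2 fun h => by simp [otherLetters] at h
    simp [this, hxa]
    omega
  · have : (m - 1) * (otherLetters n x y).count a ≤ m - 1 := by nlinarith
    simp [hxa, hya]
    omega

end block

def word (m n : ℕ) (L : List (ℕ × ℕ)) : List ℕ :=
  separator n ++ L.flatMap (fun p => block m n p.1 p.2 ++ separator n)

section word

variable {m n : ℕ} {L : List (ℕ × ℕ)}

theorem mem_block {x y z : ℕ} (hz : z ∈ block m n x y) : z = x ∨ z = y ∨ 1 ≤ z ∧ z ≤ n := by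
  simp only [block, otherLetters, ne_eq, Bool.decide_and, decide_not, List.mem_append,
    List.mem_flatten, List.mem_replicate, ↓existsAndEq, and_true, List.mem_cons, List.mem_filter,
    List.mem_range'_1, Bool.and_eq_true, Bool.not_eq_eq_eq_not, Bool.not_true,
    decide_eq_false_iff_not, List.not_mem_nil, or_false] at hz
  omega

theorem mem_word_iff (hL : ∀ p ∈ L, p.1 ∈ Finset.Icc 1 n ∧ p.2 ∈ Finset.Icc 1 n) {x : ℕ} :
    x ∈ word m n L ↔ x ∈ Finset.Icc 1 n := by
  rw [Finset.mem_Icc, ← mem_separator]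
  refine ⟨fun hx => ?_, List.mem_append_left _⟩
  simp only [word, List.mem_append, List.mem_flatMap] at hx
  obtain hx | ⟨p, hp, hx | hx⟩ := hx
  · exact hx
  · rw [mem_separator]
    have := hL p hp
    rcases mem_block hx with rfl | rfl | hx
    · simpa using this.1
    · simpa using this.2
    · exact hx
  · exact hx

theorem restrictPair_word (a b : ℕ) :
    restrictPair a b (word m n L) = restrictPair a b (separator n) ++
      L.flatMap (fun p => restrictPair a b (block m n p.1 p.2) ++
        restrictPair a b (separator n)) := by
  simp only [word, restrictPair, List.filter_append, List.filter_flatMap]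

variable {a b : ℕ}

theorem not_replicate_infix_restrictPair_word (hm : 2 ≤ m) (hL : ∀ p ∈ L, p.1 ≠ p.2)
    (ha : 1 ≤ a) (hab : a < b) (hbn : b ≤ n) (hnot : (a, b) ∉ L) :
    ¬ List.replicate m a <:+: restrictPair a b (word m n L) := by
  obtain ⟨t₁, t₂, hsep, hS⟩ := exists_restrictPair_separator_eq ha hab hbn
  have hb : b ∈ List.range' 1 n := List.mem_range'_1.2 ⟨by omega, by omega⟩
  rw [restrictPair_word, hsep]
  refine List.not_infix_append_flatMap (by simp [hab.ne']) hS
    (hsep ▸ List.not_replicate_infix_of_le hm (not_pair_infix_restrictPair_separator hab hbn))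
    fun ⟨x, y⟩ hp => ?_
  by_cases hxa : x = a
  · subst hxa
    have hyb : y ≠ b := by rintro rfl; exact hnot hp
    exact List.not_replicate_infix_of_le hm
      (not_pair_infix_restrictPair_block (by omega) hb hab.ne (hL _ hp).symm hyb)
  · exact List.not_replicate_infix_of_count_lt
      (((List.filter_sublist).count_le a).trans_lt (count_block_lt hm hxa))

theorem hasMatch_restrictPair_word_iff (hm : 2 ≤ m) (hL : ∀ p ∈ L, p.1 ≠ p.2)
    (ha : 1 ≤ a) (hab : a < b) (hbn : b ≤ n) :
    HasMatch (List.replicate m 1 ++ [2]) (restrictPair a b (word m n L)) ↔ (a, b) ∈ L := by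
  rw [hasMatch_restrictPair_iff (by omega) hab]
  refine ⟨fun h => ?_, fun h => ?_⟩
  · by_contra hnot
    exact not_replicate_infix_restrictPair_word hm hL ha hab hbn hnot
      (List.infix_append_left.trans h)
  · rw [restrictPair_word, ← restrictPair_block_self (n := n) (by omega), List.flatMap_def]
    exact List.infix_append_of_infix_right
      (List.infix_append_left.trans (List.infix_of_mem_flatten (List.mem_map_of_mem h)))

end word

theorem exists_represents {m : ℕ} (hm : 2 ≤ m) (n : ℕ) {r : ℕ → ℕ → Prop}
    (hr : ∀ x y, r x y → r y x) :
    ∃ w, Represents (List.replicate m 1 ++ [2]) w (Finset.Icc 1 n) r := by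
  classical
  let L := ((Finset.Icc 1 n ×ˢ Finset.Icc 1 n).filter fun p => p.1 ≠ p.2 ∧ ¬ r p.1 p.2).toList
  have hL : ∀ {p : ℕ × ℕ}, p ∈ L ↔ p.1 ∈ Finset.Icc 1 n ∧ p.2 ∈ Finset.Icc 1 n ∧
      p.1 ≠ p.2 ∧ ¬ r p.1 p.2 := by
    simp [L, and_assoc]
  have hpair : ∀ a ∈ Finset.Icc 1 n, ∀ b ∈ Finset.Icc 1 n, a < b →
      (r a b ↔ ¬ HasMatch (List.replicate m 1 ++ [2]) (restrictPair a b (word m n L))) := by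
    intro a ha b hb hab
    rw [hasMatch_restrictPair_word_iff hm (fun p hp => (hL.1 hp).2.2.1)
      (Finset.mem_Icc.1 ha).1 hab (Finset.mem_Icc.1 hb).2, hL]
    simp [ha, hb, hab.ne]
  refine ⟨word m n L, fun x => mem_word_iff fun p hp => ⟨(hL.1 hp).1, (hL.1 hp).2.1⟩,
    fun x hx y hy hxy => ?_⟩
  rcases lt_or_gt_of_ne hxy with h | h
  · exact hpair x hx y hy h
  · rw [show r x y ↔ r y x from ⟨hr x y, hr y x⟩]
    have := hpair y hy x hx h
    rwa [restrictPair_comm] at this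

/-- for `k ≥ 3` and `u = 1^{k-1} 2`, every graph is `u`-representable:
there exist a labeling of the vertices by `[n]` and a representing word. -/
theorem every_graph_112_representable (k : ℕ) (hk : 3 ≤ k)
    (V : Type) [Fintype V] [DecidableEq V] (G : SimpleGraph V) :
    ∃ (φ : V ≃ Fin (Fintype.card V)) (w : List ℕ),
      Represents (List.replicate (k - 1) 1 ++ [2])
        w (Finset.Icc 1 (Fintype.card V))
        (fun x y => ∃ p q : V, G.Adj p q ∧ x = (φ p : ℕ) + 1 ∧ y = (φ q : ℕ) + 1) :=
  ⟨Fintype.equivFin V,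
    exists_represents (by omega) _ fun _ _ ⟨p, q, h, hx, hy⟩ => ⟨q, p, h.symm, hy, hx⟩⟩
end

section
/- Let u = 1^a 2^b with a, b ≥ 2. Suppose the word w u-represents the labeled graph G = ([n], E), and let ij be an edge of G with i < j. Then the word w' = i^a j^b 12...n 12...n w u-represents the graph G' = ([n], E \ {ij}). -/
/-!
Fix letters `x < y`. The restriction of `i^a j^b 12⋯n 12⋯n w` to `{x, y}` is `s · xyxy · t`,
where `s` and `t` are the restrictions of `i^a j^b` and of `w`. On a word over `{x, y}` a
`1^a 2^b`-match is exactly a factor `x^a y^b`. Since `a, b ≥ 2`, such a factor contains no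
`yx` and does not start with `xy`, so it lies either in `t` or in `s · xy`; the latter needs
both letters to occur in `s`, i.e. `(x, y) = (i, j)`, and then `s = x^a y^b` is itself a
match. So the pair `ij` loses its edge and every other pair keeps its status from `w`.
-/

open List

section Words

variable {α : Type*}

theorem infix_of_infix_cons_cons {x y : α} (hxy : x ≠ y) {l t : List α}
    (h : x :: x :: l <:+: x :: y :: t) : x :: x :: l <:+: t := by
  rcases infix_cons_iff.1 h with h | h
  · simp [hxy] at h
  rcases infix_cons_iff.1 h with h | h
  · simp [hxy] at h
  exact h

theorem replicate_append_replicate_infix_append_iff [DecidableEq α] {x y : α} (hxy : x ≠ y)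
    {a b : ℕ} (ha : 2 ≤ a) (hb : 2 ≤ b) {s : List α} (hs : ¬ (x ∈ s ∧ y ∈ s)) (t : List α) :
    replicate a x ++ replicate b y <:+: s ++ x :: y :: x :: y :: t ↔
      replicate a x ++ replicate b y <:+: t := by
  refine ⟨fun h => ?_, fun h =>
    h.trans (infix_append_of_infix_right (suffix_append [x, y, x, y] t).isInfix)⟩
  have hsplit : s ++ x :: y :: x :: y :: t = (s ++ [x, y]) ++ x :: y :: t := by simp
  rw [hsplit, infix_append_iff_ne_nil] at h
  rcases h with hl | hr | ⟨l₁, l₂, hne₁, hne₂, hl, hl₁, hl₂⟩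
  · -- the counts of `x` and `y` in `s ++ [x, y]` force both letters into `s`
    have hx := hl.sublist.count_le x
    have hy := hl.sublist.count_le y
    simp [count_replicate, hxy, hxy.symm] at hx hy
    exact absurd ⟨count_pos_iff.1 (by omega), count_pos_iff.1 (by omega)⟩ hs
  · obtain ⟨a, rfl⟩ : ∃ k, a = k + 2 := ⟨a - 2, by omega⟩
    simp only [replicate_succ, cons_append] at hr ⊢
    exact infix_of_infix_cons_cons hxy hr
  · -- a factor straddling the border would contain `y` followed by `x`
    have hy : y ∈ l₁ := by
      rw [show s ++ [x, y] = (s ++ [x]) ++ [y] by simp] at hl₁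
      obtain ⟨l₁', rfl, -⟩ := (suffix_concat_iff.1 hl₁).resolve_left hne₁
      exact mem_concat_self
    have hx : x ∈ l₂ := by
      obtain ⟨l₂', rfl, -⟩ := (prefix_cons_iff.1 hl₂).resolve_left hne₂
      exact mem_cons_self
    rcases append_eq_append_iff.1 hl with ⟨m, -, hyb⟩ | ⟨m, hxa, -⟩
    · exact absurd (eq_of_mem_replicate (hyb ▸ mem_append_right m hx)) hxy
    · exact absurd (eq_of_mem_replicate (hxa ▸ mem_append_left m hy)) hxy.symm

end Words

theorem red_replicate_append_replicate {x y : ℕ} (hxy : x < y) {a b : ℕ} (ha : 0 < a)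
    (hb : 0 < b) : red (replicate a x ++ replicate b y) = replicate a 1 ++ replicate b 2 := by
  have hletters : (replicate a x ++ replicate b y).toFinset = {x, y} := by
    ext z
    simp [mem_replicate, ha.ne', hb.ne']
  simp [red, hletters, map_replicate, Finset.filter_insert, Finset.filter_singleton, hxy,
    hxy.not_gt]

theorem eq_replicate_append_replicate_of_red_eq {x y : ℕ} (hxy : x < y) {a b : ℕ} (hb : 0 < b)
    {f : List ℕ} (hf : ∀ z ∈ f, z = x ∨ z = y) (h : red f = replicate a 1 ++ replicate b 2) :
    f = replicate a x ++ replicate b y := by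
  set rank : ℕ → ℕ := fun z => (f.toFinset.filter (· < z)).card + 1 with hrank
  have hred : red f = f.map rank := rfl
  have hx : x ∈ f := by
    obtain ⟨z, hz, hz2⟩ : ∃ z ∈ f, rank z = 2 := mem_map.1 (hred ▸ h ▸ by simp [hb.ne'])
    have hcard : (f.toFinset.filter (· < z)).card = 1 := Nat.succ.inj hz2
    obtain ⟨v, hv⟩ := Finset.card_pos.1 (by omega : 0 < (f.toFinset.filter (· < z)).card)
    rw [Finset.mem_filter, mem_toFinset] at hv
    rcases hf v hv.1 with rfl | rfl
    · exact hv.1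
    · rcases hf z hz with rfl | rfl <;> omega
  have hbelow_x : f.toFinset.filter (· < x) = ∅ :=
    Finset.filter_eq_empty_iff.2 fun z hz => by
      rcases hf z (mem_toFinset.1 hz) with rfl | rfl <;> omega
  have hbelow_y : f.toFinset.filter (· < y) = {x} := by
    ext z
    simp only [Finset.mem_filter, mem_toFinset, Finset.mem_singleton]
    constructor
    · rintro ⟨hz, hzy⟩
      rcases hf z hz with rfl | rfl <;> omega
    · rintro rfl
      exact ⟨hx, hxy⟩
  have hdecode : ∀ z ∈ f, (if rank z = 1 then x else y) = z := by
    intro z hz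
    rcases hf z hz with rfl | rfl <;> simp [hrank, hbelow_x, hbelow_y]
  calc f = (f.map rank).map (fun k => if k = 1 then x else y) := by
        rw [map_map]
        exact ((map_congr_left hdecode).trans (map_id' f)).symm
    _ = replicate a x ++ replicate b y := by simp [← hred, h, map_replicate]

theorem hasMatch_iff_infix {x y : ℕ} (hxy : x < y) {a b : ℕ} (ha : 0 < a) (hb : 0 < b)
    {v : List ℕ} (hv : ∀ z ∈ v, z = x ∨ z = y) :
    HasMatch (replicate a 1 ++ replicate b 2) v ↔ replicate a x ++ replicate b y <:+: v := by
  simp only [HasMatch, length_append, length_replicate,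
    red_replicate_append_replicate one_lt_two ha hb]
  constructor
  · rintro ⟨k, -, hred⟩
    rw [← eq_replicate_append_replicate_of_red_eq hxy hb
      (fun z hz => hv z (mem_of_mem_drop (mem_of_mem_take hz))) hred]
    exact (take_prefix _ _).isInfix.trans (drop_suffix _ _).isInfix
  · rintro ⟨s, t, rfl⟩
    refine ⟨s.length, by simp, ?_⟩
    rw [append_assoc, drop_left, take_left' (by simp), red_replicate_append_replicate hxy ha hb]

theorem filter_range'_eq_pair {x y n : ℕ} (hxy : x < y) (hx : 1 ≤ x) (hy : y ≤ n) :
    (range' 1 n).filter (fun z => z = x ∨ z = y) = [x, y] :=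
  ((pairwise_lt_range' (s := 1) (n := n)).sublist filter_sublist).eq_of_mem_iff (by simp [hxy])
    fun z => by
      simp only [mem_filter, mem_range'_1, decide_eq_true_eq, mem_cons, not_mem_nil, or_false]
      omega

section Representation

variable {a b n i j : ℕ} (w : List ℕ)

theorem hasMatch_filter_prepend_iff_of_lt (ha : 2 ≤ a) (hb : 2 ≤ b) (hij : i < j) {x y : ℕ}
    (hx : x ∈ Finset.Icc 1 n) (hy : y ∈ Finset.Icc 1 n) (hxy : x < y) :
    HasMatch (replicate a 1 ++ replicate b 2)
        ((replicate a i ++ replicate b j ++ range' 1 n ++ range' 1 n ++ w).filter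
          (fun z => z = x ∨ z = y)) ↔
      (x = i ∧ y = j) ∨
        HasMatch (replicate a 1 ++ replicate b 2) (w.filter (fun z => z = x ∨ z = y)) := by
  rw [Finset.mem_Icc] at hx hy
  have hletters : ∀ l : List ℕ, ∀ z ∈ l.filter (fun z => z = x ∨ z = y), z = x ∨ z = y :=
    fun l z hz => by simpa using (mem_filter.1 hz).2
  rw [hasMatch_iff_infix hxy (by omega) (by omega) (hletters _),
    hasMatch_iff_infix hxy (by omega) (by omega) (hletters _)]
  simp only [filter_append, filter_range'_eq_pair hxy hx.1 hy.2, append_assoc, cons_append,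
    nil_append]
  by_cases hpair : x = i ∧ y = j
  · obtain ⟨rfl, rfl⟩ := hpair
    rw [← append_assoc, filter_eq_self.2 (by simp), filter_eq_self.2 (by simp)]
    exact iff_of_true infix_append_left (Or.inl ⟨rfl, rfl⟩)
  · have hs : ¬ (x ∈ (replicate a i ++ replicate b j).filter (fun z => z = x ∨ z = y) ∧
        y ∈ (replicate a i ++ replicate b j).filter (fun z => z = x ∨ z = y)) := by
      simp only [mem_filter, mem_append, mem_replicate]
      omega
    rw [← append_assoc, ← filter_append,
      replicate_append_replicate_infix_append_iff hxy.ne ha hb hs]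
    simp [hpair]

theorem hasMatch_filter_prepend_iff (ha : 2 ≤ a) (hb : 2 ≤ b) (hij : i < j) {x y : ℕ}
    (hx : x ∈ Finset.Icc 1 n) (hy : y ∈ Finset.Icc 1 n) (hxy : x ≠ y) :
    HasMatch (replicate a 1 ++ replicate b 2)
        ((replicate a i ++ replicate b j ++ range' 1 n ++ range' 1 n ++ w).filter
          (fun z => z = x ∨ z = y)) ↔
      ((x = i ∧ y = j) ∨ (x = j ∧ y = i)) ∨
        HasMatch (replicate a 1 ++ replicate b 2) (w.filter (fun z => z = x ∨ z = y)) := by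
  rcases hxy.lt_or_gt with hlt | hgt
  · have : ¬ (x = j ∧ y = i) := by omega
    rw [hasMatch_filter_prepend_iff_of_lt w ha hb hij hx hy hlt]
    tauto
  · -- restrict to `{y, x}` listed in increasing order
    simp only [or_comm (a := _ = x)]
    have : ¬ (x = i ∧ y = j) := by omega
    rw [hasMatch_filter_prepend_iff_of_lt w ha hb hij hy hx hgt]
    tauto

end Representation

theorem remove_edge_case_1122_general (a b n : ℕ) (ha : 2 ≤ a) (hb : 2 ≤ b)
    (E : ℕ → ℕ → Prop)
    (w : List ℕ)
    (hw : Represents (List.replicate a 1 ++ List.replicate b 2) w (Finset.Icc 1 n) E)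
    (i j : ℕ) (hi : i ∈ Finset.Icc 1 n) (hj : j ∈ Finset.Icc 1 n) (hij : i < j) :
    Represents (List.replicate a 1 ++ List.replicate b 2)
      (List.replicate a i ++ List.replicate b j ++
        List.range' 1 n ++ List.range' 1 n ++ w)
      (Finset.Icc 1 n)
      (fun x y => E x y ∧ ¬ ((x = i ∧ y = j) ∨ (x = j ∧ y = i))) := by
  obtain ⟨hletters, hadj⟩ := hw
  refine ⟨fun x => ?_, fun x hx y hy hxy => ?_⟩
  · simp only [Finset.mem_Icc, mem_append, mem_replicate, mem_range'_1, hletters] at hi hj ⊢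
    omega
  · show E x y ∧ _ ↔ _
    rw [hasMatch_filter_prepend_iff w ha hb hij hx hy hxy, hadj x hx y hy hxy]
    tauto

/-- for `u = 1^a 2^b` with `a, b ≥ 2`, if `w` `u`-represents
`G = ([n], E)` and `ij ∈ E` with `i < j`, then `i^a j^b 12⋯n 12⋯n w`
`u`-represents `([n], E \ {ij})`. -/
theorem remove_edge_case_1122 (a b n : ℕ) (ha : 2 ≤ a) (hb : 2 ≤ b)
    (E : ℕ → ℕ → Prop) (hsym : Symmetric E) (hirr : ∀ x, ¬ E x x)
    (w : List ℕ)
    (hw : Represents (List.replicate a 1 ++ List.replicate b 2) w (Finset.Icc 1 n) E)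
    (i j : ℕ) (hi : i ∈ Finset.Icc 1 n) (hj : j ∈ Finset.Icc 1 n) (hij : i < j)
    (he : E i j) :
    Represents (List.replicate a 1 ++ List.replicate b 2)
      (List.replicate a i ++ List.replicate b j ++
        List.range' 1 n ++ List.range' 1 n ++ w)
      (Finset.Icc 1 n)
      (fun x y => E x y ∧ ¬ ((x = i ∧ y = j) ∨ (x = j ∧ y = i))) :=
  remove_edge_case_1122_general a b n ha hb E w hw i j hi hj hij
end

section
/- Let u = 1^a 2^b 1 v with a, b ≥ 1 and v over {1,2}, of total length k. For letters x < y and a word z over {x, y} with no u-match: (i) the word x^d y^{b+1} z has no u-match for any d ≥ 1; (ii) the word y^d x^{b+1} y^{b+1} z has no u-match for any d ≥ 1; in both cases no u-match begins before the suffix z. -/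
set_option maxHeartbeats 1000000


lemma red_two_s18 (x y : ℕ) (hxy : x < y) (w : List ℕ)
    (hw : ∀ c ∈ w, c = x ∨ c = y) (hx : x ∈ w) (hy : y ∈ w) :
    red w = w.map (fun c => if c = x then 1 else 2) := by
  have hset : w.toFinset = {x, y} := by
    ext c
    simp only [List.mem_toFinset, Finset.mem_insert, Finset.mem_singleton]
    exact ⟨fun h => hw c h, fun h => by rcases h with rfl | rfl <;> assumption⟩
  unfold red
  apply List.map_congr_left
  intro c hc
  rcases hw c hc with rfl | rfl
  · have h0 : ({c, y} : Finset ℕ).filter (· < c) = ∅ := by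
      apply Finset.filter_eq_empty_iff.mpr
      intro e he
      simp only [Finset.mem_insert, Finset.mem_singleton] at he
      rcases he with rfl | rfl <;> omega
    simp [hset, h0]
  · have h1 : ({x, c} : Finset ℕ).filter (· < c) = {x} := by
      ext e
      simp only [Finset.mem_filter, Finset.mem_insert, Finset.mem_singleton]
      constructor
      · rintro ⟨rfl | rfl, h⟩
        · rfl
        · omega
      · rintro rfl
        exact ⟨Or.inl rfl, hxy⟩
    simp [hset, h1, if_neg (by omega : ¬ c = x)]

lemma red_eq_red_imp (a b x y : ℕ) (ha : 1 ≤ a) (hb : 1 ≤ b) (hxy : x < y)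
    (v : List ℕ) (hv : ∀ c ∈ v, c = 1 ∨ c = 2) (f : List ℕ)
    (hf : ∀ c ∈ f, c = x ∨ c = y)
    (h : red f = red (List.replicate a 1 ++ List.replicate b 2 ++ 1 :: v)) :
    f = (List.replicate a 1 ++ List.replicate b 2 ++ 1 :: v).map
        (fun c => if c = 1 then x else y) := by
  set u := List.replicate a 1 ++ List.replicate b 2 ++ 1 :: v with hu_def
  have hu : ∀ c ∈ u, c = 1 ∨ c = 2 := by
    intro c hc
    simp only [hu_def, List.mem_append, List.mem_replicate, List.mem_cons] at hc
    rcases hc with (⟨_, rfl⟩ | ⟨_, rfl⟩) | (rfl | hc)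
    · exact Or.inl rfl
    · exact Or.inr rfl
    · exact Or.inl rfl
    · exact hv c hc
  have h1 : (1 : ℕ) ∈ u := by
    simp only [hu_def, List.mem_append]
    exact Or.inl (Or.inl (List.mem_replicate.mpr ⟨by omega, rfl⟩))
  have h2 : (2 : ℕ) ∈ u := by
    simp only [hu_def, List.mem_append]
    exact Or.inl (Or.inr (List.mem_replicate.mpr ⟨by omega, rfl⟩))
  have redu : red u = u := by
    rw [red_two_s18 1 2 one_lt_two u hu h1 h2]
    conv_rhs => rw [← List.map_id u]
    apply List.map_congr_left
    intro c hc
    rcases hu c hc with rfl | rfl <;> simp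
  rw [redu] at h
  have hyx : y ∈ f ∧ x ∈ f := by
    have h2f : (2 : ℕ) ∈ red f := h ▸ h2
    unfold red at h2f
    obtain ⟨c, hcf, hc2⟩ := List.mem_map.mp h2f
    have hne : (f.toFinset.filter (· < c)).Nonempty := by
      rw [← Finset.card_pos]
      omega
    obtain ⟨e, he⟩ := hne
    simp only [Finset.mem_filter, List.mem_toFinset] at he
    obtain ⟨hef, hec⟩ := he
    have hcy : c = y := by
      rcases hf c hcf with rfl | rfl
      · rcases hf e hef with rfl | rfl <;> omega
      · rfl
    have hex : e = x := by
      rcases hf e hef with rfl | rfl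
      · rfl
      · subst hcy; omega
    exact ⟨hcy ▸ hcf, hex ▸ hef⟩
  rw [red_two_s18 x y hxy f hf hyx.2 hyx.1] at h
  calc f = f.map id := (List.map_id f).symm
    _ = f.map ((fun c => if c = 1 then x else y) ∘ (fun c => if c = x then 1 else 2)) := by
        apply List.map_congr_left
        intro c hc
        rcases hf c hc with rfl | rfl
        · simp
        · simp [Function.comp, if_neg (by omega : ¬ c = x)]
    _ = (f.map (fun c => if c = x then 1 else 2)).map (fun c => if c = 1 then x else y) := by
        rw [List.map_map]
    _ = u.map (fun c => if c = 1 then x else y) := by rw [h]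

lemma match_get (a b x y : ℕ) (ha : 1 ≤ a) (hb : 1 ≤ b) (hxy : x < y)
    (v : List ℕ) (hv : ∀ c ∈ v, c = 1 ∨ c = 2)
    (w : List ℕ) (hw : ∀ c ∈ w, c = x ∨ c = y) (i : ℕ)
    (hlen : i + (List.replicate a 1 ++ List.replicate b 2 ++ 1 :: v).length ≤ w.length)
    (hred : red ((w.drop i).take (List.replicate a 1 ++ List.replicate b 2 ++ 1 :: v).length)
      = red (List.replicate a 1 ++ List.replicate b 2 ++ 1 :: v)) :
    ∀ j (hj : j < (List.replicate a 1 ++ List.replicate b 2 ++ 1 :: v).length)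
      (h : i + j < w.length),
      w[i + j] =
        if (List.replicate a 1 ++ List.replicate b 2 ++ 1 :: v)[j] = 1 then x else y := by
  set u := List.replicate a 1 ++ List.replicate b 2 ++ 1 :: v with hu_def
  have hf : ∀ c ∈ (w.drop i).take u.length, c = x ∨ c = y :=
    fun c hc => hw c (List.mem_of_mem_drop (List.mem_of_mem_take hc))
  have hff := red_eq_red_imp a b x y ha hb hxy v hv _ hf hred
  intro j hj h
  have hflen : ((w.drop i).take u.length).length = u.length := by
    simp only [List.length_take, List.length_drop]
    omega
  have hjf : j < ((w.drop i).take u.length).length := by omega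
  have key : ((w.drop i).take u.length)[j] = w[i + j] := by
    rw [List.getElem_take, List.getElem_drop]
  have key2 := List.getElem_of_eq hff hjf
  rw [key] at key2
  rw [key2, List.getElem_map]

/-- for `u = 1^a 2^b 1 v` (`a, b ≥ 1`, `v` over `{1,2}`), letters `x < y`
and a word `z` over `{x, y}` with no `u`-match: (i) `x^d y^{b+1} z` has no `u`-match for
any `d ≥ 1`; (ii) `y^d x^{b+1} y^{b+1} z` has no `u`-match for any `d ≥ 1`. -/
theorem key_lemma_121 (a b x y : ℕ) (ha : 1 ≤ a) (hb : 1 ≤ b) (hxy : x < y)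
    (v : List ℕ) (hv : ∀ c ∈ v, c = 1 ∨ c = 2)
    (z : List ℕ) (hz : ∀ c ∈ z, c = x ∨ c = y)
    (hnz : ¬ HasMatch (List.replicate a 1 ++ List.replicate b 2 ++ 1 :: v) z) :
    ∀ d, 1 ≤ d →
      ¬ HasMatch (List.replicate a 1 ++ List.replicate b 2 ++ 1 :: v)
          (List.replicate d x ++ List.replicate (b + 1) y ++ z) ∧
      ¬ HasMatch (List.replicate a 1 ++ List.replicate b 2 ++ 1 :: v)
          (List.replicate d y ++ List.replicate (b + 1) x ++
            List.replicate (b + 1) y ++ z) := by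
  intro d hd
  have hk : (List.replicate a 1 ++ List.replicate b 2 ++ 1 :: v).length
      = a + b + 1 + v.length := by
    simp only [List.length_append, List.length_replicate, List.length_cons]
    omega
  have hu1 : ∀ j, j < a →
      ∀ (hj : j < (List.replicate a 1 ++ List.replicate b 2 ++ 1 :: v).length),
      (List.replicate a 1 ++ List.replicate b 2 ++ 1 :: v)[j] = 1 := by
    intro j hja hj
    rw [List.getElem_append_left
        (by simp only [List.length_append, List.length_replicate]; omega),
      List.getElem_append_left (by simp only [List.length_replicate]; omega),
      List.getElem_replicate]
  have hua : ∀ (hj : a < (List.replicate a 1 ++ List.replicate b 2 ++ 1 :: v).length),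
      (List.replicate a 1 ++ List.replicate b 2 ++ 1 :: v)[a] = 2 := by
    intro hj
    rw [List.getElem_append_left
        (by simp only [List.length_append, List.length_replicate]; omega),
      List.getElem_append_right (by simp only [List.length_replicate]; omega)]
    simp
  have huab : ∀ (hj : a + b < (List.replicate a 1 ++ List.replicate b 2 ++ 1 :: v).length),
      (List.replicate a 1 ++ List.replicate b 2 ++ 1 :: v)[a + b] = 1 := by
    intro hj
    rw [List.getElem_append_right
        (by simp only [List.length_append, List.length_replicate]; omega)]
    simp
  constructor
  · rintro ⟨i, hlen, hred⟩
    have hwmem : ∀ c ∈ List.replicate d x ++ List.replicate (b + 1) y ++ z,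
        c = x ∨ c = y := by
      intro c hc
      simp only [List.mem_append, List.mem_replicate] at hc
      rcases hc with (⟨_, rfl⟩ | ⟨_, rfl⟩) | hc
      · exact Or.inl rfl
      · exact Or.inr rfl
      · exact hz c hc
    have hwl : (List.replicate d x ++ List.replicate (b + 1) y ++ z).length
        = d + (b + 1) + z.length := by
      simp only [List.length_append, List.length_replicate]
    have hget := match_get a b x y ha hb hxy v hv _ hwmem i hlen hred
    have hwx : ∀ p, p < d →
        ∀ (hp : p < (List.replicate d x ++ List.replicate (b + 1) y ++ z).length),
        (List.replicate d x ++ List.replicate (b + 1) y ++ z)[p] = x := by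
      intro p hpd hp
      rw [List.getElem_append_left
          (by simp only [List.length_append, List.length_replicate]; omega),
        List.getElem_append_left (by simp only [List.length_replicate]; omega),
        List.getElem_replicate]
    have hwy : ∀ p, d ≤ p → p < d + (b + 1) →
        ∀ (hp : p < (List.replicate d x ++ List.replicate (b + 1) y ++ z).length),
        (List.replicate d x ++ List.replicate (b + 1) y ++ z)[p] = y := by
      intro p hp1 hp2 hp
      rw [List.getElem_append_left
          (by simp only [List.length_append, List.length_replicate]; omega),
        List.getElem_append_right (by simp only [List.length_replicate]; omega),
        List.getElem_replicate]
    by_cases hi : d + (b + 1) ≤ i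
    · apply hnz
      refine ⟨i - (d + (b + 1)), by omega, ?_⟩
      have hdrop : (List.replicate d x ++ List.replicate (b + 1) y ++ z).drop i
          = z.drop (i - (d + (b + 1))) := by
        rw [List.drop_append]
        have h1 : (List.replicate d x ++ List.replicate (b + 1) y).drop i = [] := by
          apply List.drop_eq_nil_of_le
          simp only [List.length_append, List.length_replicate]
          omega
        rw [h1, List.nil_append]
        simp only [List.length_append, List.length_replicate]
      rw [← hdrop]
      exact hred
    · push_neg at hi
      exfalso
      have e0 : (List.replicate d x ++ List.replicate (b + 1) y ++ z)[i]'(by omega) = x := by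
        have h0 := hget 0 (by omega) (by omega)
        rw [hu1 0 (by omega) (by omega)] at h0
        simpa using h0
      have hid : i < d := by
        by_contra hcon
        push_neg at hcon
        have h2 := hwy i hcon (by omega) (by omega)
        rw [e0] at h2
        omega
      have hiad : i + a ≤ d := by
        by_contra hcon
        push_neg at hcon
        have hja : d - i < a := by omega
        have h0 := hget (d - i) (by omega) (by omega)
        rw [hu1 (d - i) hja (by omega)] at h0
        rw [if_pos rfl] at h0
        have h1 : i + (d - i) = d := by omega
        simp only [h1] at h0
        have h2 := hwy d (le_refl d) (by omega) (by omega)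
        rw [h0] at h2
        omega
      have hiad' : i + a = d := by
        by_contra hcon
        have h0 := hget a (by omega) (by omega)
        rw [hua (by omega)] at h0
        rw [if_neg (show ¬(2:ℕ) = 1 by omega)] at h0
        have h1 := hwx (i + a) (by omega) (by omega)
        rw [h0] at h1
        omega
      have h0 := hget (a + b) (by omega) (by omega)
      rw [huab (by omega)] at h0
      rw [if_pos rfl] at h0
      have h1 : i + (a + b) = d + b := by omega
      simp only [h1] at h0
      have h2 := hwy (d + b) (by omega) (by omega) (by omega)
      rw [h0] at h2
      omega
  · rintro ⟨i, hlen, hred⟩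
    have hwmem : ∀ c ∈ List.replicate d y ++ List.replicate (b + 1) x ++
        List.replicate (b + 1) y ++ z, c = x ∨ c = y := by
      intro c hc
      simp only [List.mem_append, List.mem_replicate] at hc
      rcases hc with ((⟨_, rfl⟩ | ⟨_, rfl⟩) | ⟨_, rfl⟩) | hc
      · exact Or.inr rfl
      · exact Or.inl rfl
      · exact Or.inr rfl
      · exact hz c hc
    have hwl : (List.replicate d y ++ List.replicate (b + 1) x ++
        List.replicate (b + 1) y ++ z).length = d + (b + 1) + (b + 1) + z.length := by
      simp only [List.length_append, List.length_replicate]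
    have hget := match_get a b x y ha hb hxy v hv _ hwmem i hlen hred
    have hwy1 : ∀ p, p < d →
        ∀ (hp : p < (List.replicate d y ++ List.replicate (b + 1) x ++
          List.replicate (b + 1) y ++ z).length),
        (List.replicate d y ++ List.replicate (b + 1) x ++
          List.replicate (b + 1) y ++ z)[p] = y := by
      intro p hpd hp
      rw [List.getElem_append_left
          (by simp only [List.length_append, List.length_replicate]; omega),
        List.getElem_append_left
          (by simp only [List.length_append, List.length_replicate]; omega),
        List.getElem_append_left (by simp only [List.length_replicate]; omega),
        List.getElem_replicate]
    have hwx : ∀ p, d ≤ p → p < d + (b + 1) →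
        ∀ (hp : p < (List.replicate d y ++ List.replicate (b + 1) x ++
          List.replicate (b + 1) y ++ z).length),
        (List.replicate d y ++ List.replicate (b + 1) x ++
          List.replicate (b + 1) y ++ z)[p] = x := by
      intro p hp1 hp2 hp
      rw [List.getElem_append_left
          (by simp only [List.length_append, List.length_replicate]; omega),
        List.getElem_append_left
          (by simp only [List.length_append, List.length_replicate]; omega),
        List.getElem_append_right (by simp only [List.length_replicate]; omega),
        List.getElem_replicate]
    have hwy2 : ∀ p, d + (b + 1) ≤ p → p < d + (b + 1) + (b + 1) →
        ∀ (hp : p < (List.replicate d y ++ List.replicate (b + 1) x ++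
          List.replicate (b + 1) y ++ z).length),
        (List.replicate d y ++ List.replicate (b + 1) x ++
          List.replicate (b + 1) y ++ z)[p] = y := by
      intro p hp1 hp2 hp
      rw [List.getElem_append_left
          (by simp only [List.length_append, List.length_replicate]; omega),
        List.getElem_append_right
          (by simp only [List.length_append, List.length_replicate]; omega),
        List.getElem_replicate]
    by_cases hi : d + (b + 1) + (b + 1) ≤ i
    · apply hnz
      refine ⟨i - (d + (b + 1) + (b + 1)), by omega, ?_⟩
      have hdrop : (List.replicate d y ++ List.replicate (b + 1) x ++
          List.replicate (b + 1) y ++ z).drop i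
          = z.drop (i - (d + (b + 1) + (b + 1))) := by
        rw [List.drop_append]
        have h1 : (List.replicate d y ++ List.replicate (b + 1) x ++
            List.replicate (b + 1) y).drop i = [] := by
          apply List.drop_eq_nil_of_le
          simp only [List.length_append, List.length_replicate]
          omega
        rw [h1, List.nil_append]
        have h2 : (List.replicate d y ++ List.replicate (b + 1) x ++
            List.replicate (b + 1) y).length = d + (b + 1) + (b + 1) := by
          simp only [List.length_append, List.length_replicate]
        rw [h2]
      rw [← hdrop]
      exact hred
    · push_neg at hi
      exfalso
      have e0 : (List.replicate d y ++ List.replicate (b + 1) x ++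
          List.replicate (b + 1) y ++ z)[i]'(by omega) = x := by
        have h0 := hget 0 (by omega) (by omega)
        rw [hu1 0 (by omega) (by omega)] at h0
        simpa using h0
      have hid : d ≤ i := by
        by_contra hcon
        push_neg at hcon
        have h2 := hwy1 i hcon (by omega)
        rw [e0] at h2
        omega
      have hid2 : i < d + (b + 1) := by
        by_contra hcon
        push_neg at hcon
        have h2 := hwy2 i hcon (by omega) (by omega)
        rw [e0] at h2
        omega
      have hiae : i + a = d + (b + 1) := by
        rcases lt_trichotomy (i + a) (d + (b + 1)) with hlt | heq | hgt
        · exfalso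
          have h0 := hget a (by omega) (by omega)
          rw [hua (by omega)] at h0
          rw [if_neg (show ¬(2:ℕ) = 1 by omega)] at h0
          have h1 := hwx (i + a) (by omega) (by omega) (by omega)
          rw [h0] at h1
          omega
        · exact heq
        · exfalso
          have hja : d + (b + 1) - i < a := by omega
          have h0 := hget (d + (b + 1) - i) (by omega) (by omega)
          rw [hu1 _ hja (by omega)] at h0
          rw [if_pos rfl] at h0
          have h1 : i + (d + (b + 1) - i) = d + (b + 1) := by omega
          simp only [h1] at h0
          have h2 := hwy2 (d + (b + 1)) (le_refl _) (by omega) (by omega)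
          rw [h0] at h2
          omega
      have h0 := hget (a + b) (by omega) (by omega)
      rw [huab (by omega)] at h0
      rw [if_pos rfl] at h0
      have h1 : i + (a + b) = d + (b + 1) + b := by omega
      simp only [h1] at h0
      have h2 := hwy2 (d + (b + 1) + b) (by omega) (by omega) (by omega)
      rw [h0] at h2
      omega
end
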